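/- arXiv:2304.01884 — 9 statements merged into one kernel-verified Lean document; each statement's English description precedes it below -/
import Mathlib

section
/- Let b_1, ..., b_m be unit vectors in ℝ³, k_R, k_1, ..., k_m > 0, and let R_j, Â_j : ℝ → SO(3) be (possibly time-varying) matrices. Let R, R̂ : ℝ → SO(3) be differentiable and ω : ℝ → ℝ³ be such that R'(t) = R(t)[ω(t)]^× and R̂'(t) = R̂(t)[ω(t) − k_R R̂(t)ᵀ Σ_j k_j (Â_j(t) b_j^j(t) × R̂(t) b_j^i(t))]^×, where b_j^i(t) := R(t)ᵀ b_j and b_j^j(t) := R_j(t)ᵀ b_j. Then the estimation error R̃ := R R̂ᵀ satisfies R̃'(t) = −2 k_R R̃(t)[ψ(M R̃(t))]^× + k_R R̃(t)[Σ_j k_j g_j(t)]^×, where M := Σ_j k_j b_j b_jᵀ, R̃_j := R_j Â_jᵀ, and g_j(t) := (R̃_j(t)ᵀ − I₃) b_j × R̃(t)ᵀ b_j. -/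
open Matrix Real Filter

noncomputable section

/-- 3×3 real matrices. -/
abbrev M3 := Matrix (Fin 3) (Fin 3) ℝ
/-- Vectors in ℝ³. -/
abbrev V3 := Fin 3 → ℝ

/-- The special orthogonal group SO(3). -/
def SO3 (R : M3) : Prop := Rᵀ * R = 1 ∧ R.det = 1

/-- The skew-symmetric matrix [x]^× with [x]^× y = x × y. -/
def skew (x : V3) : M3 := !![0, -x 2, x 1; x 2, 0, -x 0; -x 1, x 0, 0]

/-- ψ(C) = vex(𝒫ₐ(C)) = (1/2)[c₃₂ − c₂₃, c₁₃ − c₃₁, c₂₁ − c₁₂]ᵀ. -/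
def psi (C : M3) : V3 := ![(C 2 1 - C 1 2)/2, (C 0 2 - C 2 0)/2, (C 1 0 - C 0 1)/2]

/-- Euclidean norm on ℝ³. -/
def norm3 (x : V3) : ℝ := Real.sqrt (x ⬝ᵥ x)

/-- Frobenius norm on 3×3 matrices. -/
def frob (A : M3) : ℝ := Real.sqrt ((Aᵀ * A).trace)

/-- Normalized Euclidean distance |R|_I = √((1/4) tr(I₃ − R)) on SO(3). -/
def nI (R : M3) : ℝ := Real.sqrt ((1 - R).trace / 4)

/-- Orthogonal projection matrix P_x = I₃ − x xᵀ/‖x‖². -/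
def proj (x : V3) : M3 := 1 - (x ⬝ᵥ x)⁻¹ • vecMulVec x x

/-- Entrywise derivative of a matrix-valued function. -/
def HasMatDerivAt (X : ℝ → M3) (X' : M3) (t : ℝ) : Prop :=
  ∀ i j, HasDerivAt (fun s => X s i j) (X' i j) t

/-- Entrywise derivative of a vector-valued function. -/
def HasVecDerivAt (x : ℝ → V3) (x' : V3) (t : ℝ) : Prop :=
  ∀ i, HasDerivAt (fun s => x s i) (x' i) t


lemma cross_adj (Q : M3) (a c : V3) :
    crossProduct (Q *ᵥ a) (Q *ᵥ c) = (Q.adjugate)ᵀ *ᵥ crossProduct a c := by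
  funext i
  fin_cases i <;>
    simp [cross_apply, Matrix.mulVec, dotProduct, Fin.sum_univ_three,
      Matrix.adjugate_apply, Matrix.det_fin_three, Matrix.updateRow_apply, Pi.single,
      Function.update, Matrix.transpose_apply] <;> ring

lemma adj_eq (Q : M3) (h1 : Qᵀ * Q = 1) (h2 : Q.det = 1) : Q.adjugate = Qᵀ := by
  calc Q.adjugate = (Qᵀ * Q) * Q.adjugate := by rw [h1, one_mul]
    _ = Qᵀ * (Q * Q.adjugate) := by rw [mul_assoc]
    _ = Qᵀ := by rw [Matrix.mul_adjugate, h2, one_smul, mul_one]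

lemma skew_mulVec (x y : V3) : skew x *ᵥ y = crossProduct x y := by
  funext i
  fin_cases i <;> simp [skew, cross_apply, Matrix.mulVec, dotProduct, Fin.sum_univ_three] <;> ring

lemma eq_of_mulVec (A B : M3) (h : ∀ v, A *ᵥ v = B *ᵥ v) : A = B := by
  ext i j
  have := congrFun (h (Pi.single j 1)) i
  simpa [Matrix.mulVec_single] using this

lemma skew_conj (Q : M3) (hQ : SO3 Q) (u : V3) : skew (Qᵀ *ᵥ u) = Qᵀ * skew u * Q := by
  obtain ⟨h1, h2⟩ := hQ
  apply eq_of_mulVec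
  intro v
  have hv : Qᵀ *ᵥ (Q *ᵥ v) = v := by rw [Matrix.mulVec_mulVec, h1, Matrix.one_mulVec]
  have hadj : (Qᵀ).adjugate = Q := by
    rw [← Matrix.adjugate_transpose, adj_eq Q h1 h2, Matrix.transpose_transpose]
  calc skew (Qᵀ *ᵥ u) *ᵥ v = crossProduct (Qᵀ *ᵥ u) (Qᵀ *ᵥ (Q *ᵥ v)) := by
        rw [hv, skew_mulVec]
    _ = ((Qᵀ).adjugate)ᵀ *ᵥ crossProduct u (Q *ᵥ v) := cross_adj _ _ _
    _ = Qᵀ *ᵥ (skew u *ᵥ (Q *ᵥ v)) := by rw [hadj, skew_mulVec]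
    _ = (Qᵀ * skew u * Q) *ᵥ v := by rw [Matrix.mulVec_mulVec, Matrix.mulVec_mulVec, mul_assoc]

lemma skew_transpose (x : V3) : (skew x)ᵀ = skew (-x) := by
  ext i j; fin_cases i <;> fin_cases j <;> simp [skew]

lemma skew_add (x y : V3) : skew (x + y) = skew x + skew y := by
  ext i j; fin_cases i <;> fin_cases j <;> simp [skew] <;> ring

lemma skew_smul (c : ℝ) (x : V3) : skew (c • x) = c • skew x := by
  ext i j; fin_cases i <;> fin_cases j <;> simp [skew] <;> ring

lemma skew_neg (x : V3) : skew (-x) = - skew x := by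
  ext i j; fin_cases i <;> fin_cases j <;> simp [skew]

lemma skew_sub (x y : V3) : skew (x - y) = skew x - skew y := by
  rw [sub_eq_add_neg, skew_add, skew_neg, sub_eq_add_neg]

lemma HasMatDerivAt.matmul {X Y : ℝ → M3} {X' Y' : M3} {t : ℝ}
    (hX : HasMatDerivAt X X' t) (hY : HasMatDerivAt Y Y' t) :
    HasMatDerivAt (fun s => X s * Y s) (X' * Y t + X t * Y') t := by
  intro i j
  have h : ∀ s, (X s * Y s) i j = ∑ l, X s i l * Y s l j := fun s => Matrix.mul_apply
  simp only [h]
  have : (X' * Y t + X t * Y') i j = ∑ l, (X' i l * Y t l j + X t i l * Y' l j) := by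
    simp [Matrix.mul_apply, Matrix.add_apply, Finset.sum_add_distrib]
  rw [this]
  exact HasDerivAt.fun_sum fun l _ => (hX i l).mul (hY l j)

lemma HasMatDerivAt.mattranspose {X : ℝ → M3} {X' : M3} {t : ℝ}
    (h : HasMatDerivAt X X' t) : HasMatDerivAt (fun s => (X s)ᵀ) X'ᵀ t :=
  fun i j => h j i

lemma psi_sum {ι : Type*} (s : Finset ι) (f : ι → M3) :
    psi (∑ i ∈ s, f i) = ∑ i ∈ s, psi (f i) := by
  funext i
  fin_cases i <;>
    simp [psi, Matrix.sum_apply, sub_div, Finset.sum_sub_distrib, Finset.sum_div]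

lemma psi_smul (c : ℝ) (C : M3) : psi (c • C) = c • psi C := by
  funext i; fin_cases i <;> simp [psi] <;> ring

/-- key pointwise identity -/
lemma key_vec (bb : V3) (C D : M3) :
    crossProduct (Dᵀ *ᵥ bb) (Cᵀ *ᵥ bb) =
      crossProduct ((Dᵀ - 1) *ᵥ bb) (Cᵀ *ᵥ bb) + (-2 : ℝ) • psi (vecMulVec bb bb * C) := by
  funext i
  fin_cases i <;>
    simp [cross_apply, psi, Matrix.mulVec, dotProduct, Fin.sum_univ_three, Matrix.mul_apply,
      Matrix.vecMulVec_apply, Matrix.sub_apply, Matrix.one_apply, Matrix.transpose_apply] <;>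
    ring

/-- the attitude estimation error dynamics. -/
theorem attitude_error_dynamics (m : ℕ) (b : Fin m → V3) (kR : ℝ) (k : Fin m → ℝ)
    (hb : ∀ j, b j ⬝ᵥ b j = 1) (hkR : 0 < kR) (hk : ∀ j, 0 < k j)
    (Rj Aj : Fin m → ℝ → M3) (R Rhat : ℝ → M3) (ω : ℝ → V3)
    (hRj : ∀ j t, SO3 (Rj j t)) (hAj : ∀ j t, SO3 (Aj j t))
    (hR : ∀ t, SO3 (R t)) (hRhat : ∀ t, SO3 (Rhat t))
    (hRdyn : ∀ t, HasMatDerivAt R (R t * skew (ω t)) t)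
    (hRhatdyn : ∀ t, HasMatDerivAt Rhat
      (Rhat t * skew (ω t - kR • ((Rhat t)ᵀ *ᵥ
        ∑ j, k j • crossProduct (Aj j t *ᵥ ((Rj j t)ᵀ *ᵥ b j))
          (Rhat t *ᵥ ((R t)ᵀ *ᵥ b j))))) t)
    (Rtil : ℝ → M3) (hRtil : ∀ t, Rtil t = R t * (Rhat t)ᵀ)
    (Rtilj : Fin m → ℝ → M3) (hRtilj : ∀ j t, Rtilj j t = Rj j t * (Aj j t)ᵀ)
    (M : M3) (hM : M = ∑ j, k j • vecMulVec (b j) (b j))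
    (g : Fin m → ℝ → V3)
    (hg : ∀ j t, g j t = crossProduct (((Rtilj j t)ᵀ - 1) *ᵥ b j) ((Rtil t)ᵀ *ᵥ b j)) :
    ∀ t, HasMatDerivAt Rtil
      ((-(2 * kR)) • (Rtil t * skew (psi (M * Rtil t))) +
        kR • (Rtil t * skew (∑ j, k j • g j t))) t := by
  intro t
  set u : V3 := ∑ j, k j • crossProduct (Aj j t *ᵥ ((Rj j t)ᵀ *ᵥ b j))
      (Rhat t *ᵥ ((R t)ᵀ *ᵥ b j)) with hu
  have hfun : Rtil = fun s => R s * (Rhat s)ᵀ := funext hRtil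
  have hD : HasMatDerivAt Rtil
      ((R t * skew (ω t)) * (Rhat t)ᵀ +
        R t * (Rhat t * skew (ω t - kR • ((Rhat t)ᵀ *ᵥ u)))ᵀ) t := by
    rw [hfun]
    exact (hRdyn t).matmul (hRhatdyn t).mattranspose
  have hB1 : (Rhat t)ᵀ * Rhat t = 1 := (hRhat t).1
  have hBB : Rhat t * (Rhat t)ᵀ = 1 := mul_eq_one_comm.mp hB1
  -- vector identity: u = ∑ k j • g j t + (-2) • psi (M * Rtil t)
  have hvec : u = (∑ j, k j • g j t) + (-2 : ℝ) • psi (M * Rtil t) := by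
    have hterm : ∀ j, crossProduct (Aj j t *ᵥ ((Rj j t)ᵀ *ᵥ b j))
        (Rhat t *ᵥ ((R t)ᵀ *ᵥ b j)) =
        g j t + (-2 : ℝ) • psi (vecMulVec (b j) (b j) * Rtil t) := by
      intro j
      have h1 : Aj j t *ᵥ ((Rj j t)ᵀ *ᵥ b j) = (Rtilj j t)ᵀ *ᵥ b j := by
        rw [Matrix.mulVec_mulVec, hRtilj, Matrix.transpose_mul, Matrix.transpose_transpose]
      have h2 : Rhat t *ᵥ ((R t)ᵀ *ᵥ b j) = (Rtil t)ᵀ *ᵥ b j := by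
        rw [Matrix.mulVec_mulVec, hRtil, Matrix.transpose_mul, Matrix.transpose_transpose]
      rw [h1, h2, key_vec, ← hg]
    have hMC : psi (M * Rtil t) = ∑ j, k j • psi (vecMulVec (b j) (b j) * Rtil t) := by
      rw [hM, Finset.sum_mul, psi_sum]
      congr 1
      funext j
      rw [Matrix.smul_mul, psi_smul]
    rw [hu]
    simp only [hterm, smul_add, Finset.sum_add_distrib, hMC, Finset.smul_sum]
    congr 1
    exact Finset.sum_congr rfl fun j _ => smul_comm _ _ _
  -- the matrix computation
  have hE : (R t * skew (ω t)) * (Rhat t)ᵀ +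
      R t * (Rhat t * skew (ω t - kR • ((Rhat t)ᵀ *ᵥ u)))ᵀ =
      (-(2 * kR)) • (Rtil t * skew (psi (M * Rtil t))) +
        kR • (Rtil t * skew (∑ j, k j • g j t)) := by
    have hz : skew ((Rhat t)ᵀ *ᵥ u) = (Rhat t)ᵀ * skew u * Rhat t :=
      skew_conj (Rhat t) (hRhat t) u
    calc (R t * skew (ω t)) * (Rhat t)ᵀ +
        R t * (Rhat t * skew (ω t - kR • ((Rhat t)ᵀ *ᵥ u)))ᵀ
        = (R t * skew (ω t)) * (Rhat t)ᵀ +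
          R t * ((kR • skew ((Rhat t)ᵀ *ᵥ u) - skew (ω t)) * (Rhat t)ᵀ) := by
          rw [Matrix.transpose_mul, skew_transpose, neg_sub, skew_sub, skew_smul,
            ← mul_assoc]
      _ = kR • (R t * ((Rhat t)ᵀ * skew u * Rhat t) * (Rhat t)ᵀ) := by
          have habel : ∀ A K : M3, A + (K - A) = K := fun A K => by abel
          rw [hz, sub_mul, mul_sub, mul_assoc (R t) (skew (ω t)) ((Rhat t)ᵀ), habel,
            Matrix.smul_mul, mul_smul_comm, mul_assoc]
          simp only [mul_assoc]
      _ = kR • (Rtil t * skew u) := by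
          rw [hRtil]
          congr 1
          calc R t * ((Rhat t)ᵀ * skew u * Rhat t) * (Rhat t)ᵀ
              = R t * (Rhat t)ᵀ * skew u * (Rhat t * (Rhat t)ᵀ) := by
                simp only [mul_assoc]
            _ = R t * (Rhat t)ᵀ * skew u := by rw [hBB, mul_one]
      _ = (-(2 * kR)) • (Rtil t * skew (psi (M * Rtil t))) +
            kR • (Rtil t * skew (∑ j, k j • g j t)) := by
          rw [hvec, skew_add, skew_smul, mul_add, smul_add, add_comm]
          congr 1
          rw [mul_smul_comm, smul_smul]
          congr 1
          ring
  rw [hE] at hD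
  exact hD
end
end

section
/- Let M ∈ ℝ^{3×3} be symmetric, k_R > 0, and let R̃ : ℝ → SO(3) be differentiable with R̃'(t) = −2 k_R R̃(t)[ψ(M R̃(t))]^×. Then the function ℒ(t) := (1/4) tr(M (I₃ − R̃(t))) is differentiable with ℒ'(t) = −k_R ‖ψ(M R̃(t))‖² for all t; in particular ℒ is nonincreasing. -/
open Matrix Real Filter

noncomputable section

/-- tr(C · [x]^×) = −2 ⟨x, ψ(C)⟩ for any C and x. -/
lemma trace_mul_skew (C : M3) (x : V3) : (C * skew x).trace = -2 * (x ⬝ᵥ psi C) := by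
  simp [Matrix.trace, Matrix.diag, Matrix.mul_apply, skew, psi, dotProduct, Fin.sum_univ_three]
  ring

/-- the Lyapunov function ℒ(t) = (1/4) tr(M(I₃ − R̃(t))) has derivative
    −k_R ‖ψ(M R̃(t))‖²; in particular it is nonincreasing. -/
theorem lyapunov_derivative (M : M3) (hM : Mᵀ = M) (kR : ℝ) (hkR : 0 < kR)
    (Rtil : ℝ → M3) (hSO3 : ∀ t, SO3 (Rtil t))
    (hdyn : ∀ t, HasMatDerivAt Rtil ((-(2 * kR)) • (Rtil t * skew (psi (M * Rtil t)))) t) :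
    (∀ t, HasDerivAt (fun s => (M * (1 - Rtil s)).trace / 4)
        (-kR * (psi (M * Rtil t) ⬝ᵥ psi (M * Rtil t))) t) ∧
      Antitone (fun t => (M * (1 - Rtil t)).trace / 4) := by
  have key : ∀ t, HasDerivAt (fun s => (M * (1 - Rtil s)).trace / 4)
      (-kR * (psi (M * Rtil t) ⬝ᵥ psi (M * Rtil t))) t := by
    intro t
    have hR' := hdyn t
    set R' : M3 := (-(2 * kR)) • (Rtil t * skew (psi (M * Rtil t))) with hR'def
    have hfun : (fun s => (M * (1 - Rtil s)).trace / 4)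
        = fun s => (M.trace - ∑ i : Fin 3, ∑ j : Fin 3, M i j * Rtil s j i) / 4 := by
      funext s
      simp [Matrix.trace, Matrix.diag, Matrix.mul_apply, Matrix.one_apply,
        Fin.sum_univ_three]
      ring
    rw [hfun]
    have hsum : HasDerivAt
        (fun s => (M.trace - ∑ i : Fin 3, ∑ j : Fin 3, M i j * Rtil s j i) / 4)
        ((0 - ∑ i : Fin 3, ∑ j : Fin 3, M i j * R' j i) / 4) t := by
      apply HasDerivAt.div_const
      apply HasDerivAt.sub (hasDerivAt_const _ _)
      apply HasDerivAt.fun_sum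
      intro i _
      apply HasDerivAt.fun_sum
      intro j _
      exact (hR' j i).const_mul (M i j)
    convert hsum using 1
    have h1 : ∑ i : Fin 3, ∑ j : Fin 3, M i j * R' j i = (M * R').trace := by
      simp [Matrix.trace, Matrix.diag, Matrix.mul_apply]
    rw [h1, hR'def, Matrix.mul_smul, Matrix.trace_smul, ← Matrix.mul_assoc,
      trace_mul_skew]
    simp only [smul_eq_mul]
    ring
  refine ⟨key, ?_⟩
  apply antitone_of_deriv_nonpos
  · intro t
    exact (key t).differentiableAt
  · intro t
    rw [(key t).deriv]
    have h1 : 0 ≤ psi (M * Rtil t) ⬝ᵥ psi (M * Rtil t) :=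
      Finset.sum_nonneg fun i _ => mul_self_nonneg _
    nlinarith
end
end

section
/- Let M ∈ ℝ^{3×3} be symmetric positive semi-definite with three distinct eigenvalues. Then for R ∈ SO(3), one has ψ(M R) = 0 if and only if R ∈ Υ := {I₃} ∪ {ℛ_α(π, v) : v ∈ 𝕊², M v = λ v for some λ ∈ ℝ}. Moreover, the set Υ consists of exactly four elements (the identity and the three rotations by angle π about the three eigendirections of M), so the equilibria are isolated. -/
open Matrix Real Filter

noncomputable section

/-- Angle-axis parameterization ℛ_α(θ, v) = I₃ + sin θ [v]^× + (1 − cos θ)([v]^×)². -/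
def rotAA (θ : ℝ) (v : V3) : M3 :=
  1 + Real.sin θ • skew v + (1 - Real.cos θ) • (skew v * skew v)

/-- The set of equilibria Υ = {I₃} ∪ {ℛ_α(π, v) : v ∈ 𝕊², v an eigenvector of M}. -/
def Upsilon (M : M3) : Set M3 :=
  {1} ∪ {A | ∃ v : V3, v ⬝ᵥ v = 1 ∧ (∃ l : ℝ, M *ᵥ v = l • v) ∧ A = rotAA Real.pi v}


section Aux

lemma psi_eq_zero_iff (C : M3) : psi C = 0 ↔ Cᵀ = C := by
  constructor
  · intro h
    have h0 := congrFun h 0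
    have h1 := congrFun h 1
    have h2 := congrFun h 2
    simp [psi] at h0 h1 h2
    ext i j
    fin_cases i <;> fin_cases j <;> simp [Matrix.transpose_apply] <;> linarith
  · intro h
    have e : ∀ i j, C j i = C i j := fun i j => congrFun (congrFun h i) j
    funext i
    fin_cases i <;> simp [psi] <;> linarith [e 2 1, e 0 2, e 1 0]

lemma skew_sq (v : V3) : skew v * skew v = vecMulVec v v - (v ⬝ᵥ v) • 1 := by
  ext i j
  fin_cases i <;> fin_cases j <;>
    simp [skew, vecMulVec_apply, dotProduct, Fin.sum_univ_three, Matrix.mul_apply,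
      Matrix.one_apply] <;> ring

lemma rotAA_pi (v : V3) (hv : v ⬝ᵥ v = 1) :
    rotAA Real.pi v = (2:ℝ) • vecMulVec v v - 1 := by
  rw [rotAA, Real.sin_pi, Real.cos_pi, skew_sq, hv]
  module

lemma mul_vecMulVec (M : M3) (v w : V3) : M * vecMulVec v w = vecMulVec (M *ᵥ v) w := by
  ext i j
  simp [Matrix.mul_apply, vecMulVec_apply, mulVec, dotProduct, Fin.sum_univ_three]
  ring

lemma vmv_smul_left (l : ℝ) (v w : V3) : vecMulVec (l • v) w = l • vecMulVec v w := by
  ext i j; simp [vecMulVec_apply]; ring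

lemma dot_vmv (a x : V3) : x ⬝ᵥ (vecMulVec a a *ᵥ x) = (a ⬝ᵥ x)^2 := by
  simp [dotProduct, vecMulVec_apply, mulVec, Fin.sum_univ_three]
  ring

lemma trace_vmv (v : V3) : (vecMulVec v v).trace = v ⬝ᵥ v := by
  simp [Matrix.trace, Matrix.diag, vecMulVec_apply, dotProduct]

lemma conj_single (Q : M3) (k : Fin 3) :
    Q * diagonal (Pi.single k 1) * Qᵀ = vecMulVec (fun i => Q i k) (fun i => Q i k) := by
  ext i j
  fin_cases k <;>
    simp [Matrix.mul_apply, diagonal_apply, Pi.single_apply, vecMulVec_apply,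
      Fin.sum_univ_three, Matrix.transpose_apply] <;> ring

lemma symm_of_eig (M : M3) (hsym : Mᵀ = M) (v : V3) (hv : v ⬝ᵥ v = 1) (l : ℝ)
    (hl : M *ᵥ v = l • v) : (M * rotAA Real.pi v)ᵀ = M * rotAA Real.pi v := by
  have hW : (vecMulVec v v)ᵀ = vecMulVec v v := by
    ext i j; simp [vecMulVec_apply, Matrix.transpose_apply, mul_comm]
  have h : M * rotAA Real.pi v = (2 * l) • vecMulVec v v - M := by
    rw [rotAA_pi v hv, Matrix.mul_sub, Matrix.mul_one, Matrix.mul_smul, mul_vecMulVec, hl,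
      vmv_smul_left, smul_smul]
  rw [h, Matrix.transpose_sub, Matrix.transpose_smul, hW, hsym]

end Aux

/-- characterization of the equilibria ψ(M R) = 0 on SO(3), and the fact that
    Υ consists of exactly four (isolated) points. -/
theorem equilibria_characterization (M : M3) (hsym : Mᵀ = M) (hpsd : M.PosSemidef)
    (hdist : Function.Injective hpsd.1.eigenvalues) :
    (∀ R : M3, SO3 R → (psi (M * R) = 0 ↔ R ∈ Upsilon M)) ∧
      (Upsilon M).ncard = 4 := by
  classical
  have hM := hpsd.1
  set Q : M3 := (hM.eigenvectorUnitary : M3) with hQdef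
  set μ : Fin 3 → ℝ := hM.eigenvalues with hμdef
  have hQ : Qᵀ * Q = 1 := by
    have := (hM.eigenvectorUnitary).2
    rw [Matrix.mem_unitaryGroup_iff'] at this
    simpa [hQdef, star_eq_conjTranspose, Matrix.conjTranspose_eq_transpose_of_trivial] using this
  have hQ' : Q * Qᵀ = 1 := mul_eq_one_comm.mp hQ
  have hspec : M = Q * diagonal μ * Qᵀ := by
    have hspec := hM.spectral_theorem
    simp only [star_eq_conjTranspose, Matrix.conjTranspose_eq_transpose_of_trivial,
      RCLike.ofReal_real_eq_id, Function.comp_id, Function.id_comp] at hspec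
    exact hspec
  have hQpt : ∀ X : M3, Qᵀ * (Q * X) = X := fun X => by rw [← mul_assoc, hQ, one_mul]
  have hQpt' : ∀ X : M3, Q * (Qᵀ * X) = X := fun X => by rw [← mul_assoc, hQ', one_mul]
  set u : Fin 3 → V3 := fun k i => Q i k with hudef
  have hortho : ∀ j k, u j ⬝ᵥ u k = if j = k then 1 else 0 := by
    intro j k
    have h := congrFun (congrFun hQ j) k
    simpa [Matrix.mul_apply, dotProduct, Matrix.transpose_apply, Matrix.one_apply, hudef] using h
  have hunit : ∀ k, u k ⬝ᵥ u k = 1 := fun k => by simpa using hortho k k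
  have husingle : ∀ k, u k = Q *ᵥ Pi.single k 1 := by
    intro k; funext i; simp [hudef, Matrix.mulVec_single]
  have hMQ : M * Q = Q * diagonal μ := by rw [hspec, mul_assoc, mul_assoc, hQ, mul_one]
  have heig : ∀ k, M *ᵥ u k = μ k • u k := by
    intro k
    rw [husingle, Matrix.mulVec_mulVec, hMQ, ← Matrix.mulVec_mulVec,
      Matrix.diagonal_mulVec_single]
    have h5 : (Pi.single k (μ k * 1) : V3) = μ k • (Pi.single k 1 : V3) := by
      funext i
      rcases eq_or_ne i k with rfl | h
      · simp
      · simp [Pi.single_eq_of_ne h]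
    rw [h5, Matrix.mulVec_smul]
  have hμnn : ∀ k, 0 ≤ μ k := fun k => hpsd.eigenvalues_nonneg k
  have back : ∀ R ∈ Upsilon M, (M * R)ᵀ = M * R := by
    intro R hR
    rcases hR with hR | ⟨v, hv1, ⟨l, hl⟩, rfl⟩
    · rw [Set.mem_singleton_iff] at hR; subst hR
      rw [Matrix.mul_one, hsym]
    · exact symm_of_eig M hsym v hv1 l hl
  have fwd : ∀ R : M3, SO3 R → (M * R)ᵀ = M * R → R ∈ Upsilon M := by
    intro R hSO hsymMR
    have hRpt : ∀ X : M3, Rᵀ * (R * X) = X := fun X => by rw [← mul_assoc, hSO.1, one_mul]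
    set S : M3 := Qᵀ * R * Q with hSdef
    have hRS : R = Q * S * Qᵀ := by
      rw [hSdef]
      calc R = Q * (Qᵀ * (R * (Q * Qᵀ))) := by rw [hQ', mul_one, hQpt']
        _ = Q * (Qᵀ * R * Q) * Qᵀ := by simp [mul_assoc]
    have hSorth : Sᵀ * S = 1 := by
      calc Sᵀ * S = Qᵀ * (Rᵀ * (Q * (Qᵀ * (R * Q)))) := by
            simp [hSdef, Matrix.transpose_mul, mul_assoc]
        _ = 1 := by rw [hQpt', hRpt, hQ]
    have hSS' : S * Sᵀ = 1 := mul_eq_one_comm.mp hSorth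
    have hMR : M * R = Q * (diagonal μ * S) * Qᵀ := by
      calc M * R = Q * diagonal μ * Qᵀ * (Q * S * Qᵀ) := by rw [← hspec, ← hRS]
        _ = Q * (diagonal μ * (Qᵀ * (Q * (S * Qᵀ)))) := by simp [mul_assoc]
        _ = Q * (diagonal μ * (S * Qᵀ)) := by rw [hQpt]
        _ = Q * (diagonal μ * S) * Qᵀ := by simp [mul_assoc]
    have hDS : diagonal μ * S = Sᵀ * diagonal μ := by
      have h1 : (M * R)ᵀ = Q * (Sᵀ * diagonal μ) * Qᵀ := by
        rw [hMR]
        simp [Matrix.transpose_mul, Matrix.diagonal_transpose, mul_assoc]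
      have h2 : Q * (diagonal μ * S) * Qᵀ = Q * (Sᵀ * diagonal μ) * Qᵀ := by
        rw [← hMR, ← h1, hsymMR]
      have h3 := congrArg (fun Z => Qᵀ * Z * Q) h2
      simpa [mul_assoc, hQpt, hQ, hQpt', mul_one] using h3
    have hD1 : diagonal μ = Sᵀ * diagonal μ * Sᵀ := by
      calc diagonal μ = diagonal μ * (S * Sᵀ) := by rw [hSS', mul_one]
        _ = (diagonal μ * S) * Sᵀ := (mul_assoc _ _ _).symm
        _ = Sᵀ * diagonal μ * Sᵀ := by rw [hDS]
    have hDS2 : S * diagonal μ = diagonal μ * Sᵀ := by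
      calc S * diagonal μ = S * (Sᵀ * diagonal μ * Sᵀ) := by rw [← hD1]
        _ = (S * Sᵀ) * (diagonal μ * Sᵀ) := by simp [mul_assoc]
        _ = diagonal μ * Sᵀ := by rw [hSS', one_mul]
    have E1 : ∀ i j, μ i * S i j = S j i * μ j := by
      intro i j
      have h := congrFun (congrFun hDS i) j
      simpa [Matrix.diagonal_mul, Matrix.mul_diagonal, Matrix.transpose_apply] using h
    have E2 : ∀ i j, S i j * μ j = μ i * S j i := by
      intro i j
      have h := congrFun (congrFun hDS2 i) j
      simpa [Matrix.diagonal_mul, Matrix.mul_diagonal, Matrix.transpose_apply] using h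
    have hoff : ∀ i j, i ≠ j → S i j = 0 := by
      intro i j hij
      have e1 := E1 i j
      have e2 := E2 i j
      have hkey : (μ i * μ i - μ j * μ j) * S i j = 0 := by
        linear_combination μ i * e1 - μ j * e2
      rcases mul_eq_zero.mp hkey with h | h
      · exfalso
        have h' : (μ i - μ j) * (μ i + μ j) = 0 := by linear_combination h
        have hne : μ i ≠ μ j := fun hh => hij (hdist hh)
        rcases mul_eq_zero.mp h' with h'' | h''
        · exact hne (by linarith)
        · exact hne (by have := hμnn i; have := hμnn j; linarith)
      · exact h
    have o01 := hoff 0 1 (by decide)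
    have o02 := hoff 0 2 (by decide)
    have o10 := hoff 1 0 (by decide)
    have o12 := hoff 1 2 (by decide)
    have o20 := hoff 2 0 (by decide)
    have o21 := hoff 2 1 (by decide)
    have hd : ∀ k : Fin 3, S k k * S k k = 1 := by
      intro k
      have h := congrFun (congrFun hSorth k) k
      fin_cases k <;>
        simpa [Matrix.mul_apply, Matrix.transpose_apply, Fin.sum_univ_three, Matrix.one_apply,
          o01, o02, o10, o12, o20, o21] using h
    have hdet1 : Q.det * Q.det = 1 := by
      have h := congrArg Matrix.det hQ
      simpa [Matrix.det_mul, Matrix.det_transpose, Matrix.det_one] using h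
    have hdetS : S.det = 1 := by
      have h : S.det = Qᵀ.det * R.det * Q.det := by simp [hSdef, Matrix.det_mul]
      rw [Matrix.det_transpose, hSO.2] at h
      rw [h]; linear_combination hdet1
    have hprod : S 0 0 * S 1 1 * S 2 2 = 1 := by
      rw [Matrix.det_fin_three] at hdetS
      simp [o01, o02, o10, o12, o20, o21] at hdetS
      linarith
    have hc : ∀ k : Fin 3, S k k = 1 ∨ S k k = -1 := fun k => mul_self_eq_one_iff.mp (hd k)
    have hcase : ∀ k : Fin 3, S = (2:ℝ) • diagonal (Pi.single k 1) - 1 → R ∈ Upsilon M := by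
      intro k hSk
      right
      refine ⟨u k, hunit k, ⟨μ k, heig k⟩, ?_⟩
      rw [rotAA_pi _ (hunit k), hRS, hSk, Matrix.mul_sub, Matrix.mul_one, Matrix.sub_mul,
        Matrix.mul_smul, Matrix.smul_mul, conj_single, hQ']
    rcases hc 0 with h0 | h0 <;> rcases hc 1 with h1 | h1 <;> rcases hc 2 with h2 | h2
    · left
      have hS1 : S = 1 := by
        ext i j
        fin_cases i <;> fin_cases j <;>
          simp [Matrix.one_apply, h0, h1, h2, o01, o02, o10, o12, o20, o21]
      have hR1 : R = 1 := by rw [hRS, hS1, mul_one, hQ']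
      simp [hR1]
    · exfalso; rw [h0, h1, h2] at hprod; norm_num at hprod
    · exfalso; rw [h0, h1, h2] at hprod; norm_num at hprod
    · apply hcase 0
      ext i j
      fin_cases i <;> fin_cases j <;>
        simp [Matrix.one_apply, diagonal_apply, Pi.single_apply, h0, h1, h2, o01, o02, o10,
          o12, o20, o21] <;> norm_num
    · exfalso; rw [h0, h1, h2] at hprod; norm_num at hprod
    · apply hcase 1
      ext i j
      fin_cases i <;> fin_cases j <;>
        simp [Matrix.one_apply, diagonal_apply, Pi.single_apply, h0, h1, h2, o01, o02, o10,
          o12, o20, o21] <;> norm_num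
    · apply hcase 2
      ext i j
      fin_cases i <;> fin_cases j <;>
        simp [Matrix.one_apply, diagonal_apply, Pi.single_apply, h0, h1, h2, o01, o02, o10,
          o12, o20, o21] <;> norm_num
    · exfalso; rw [h0, h1, h2] at hprod; norm_num at hprod
  constructor
  · intro R hSO
    rw [psi_eq_zero_iff]
    exact ⟨fwd R hSO, back R⟩
  · have htr : ∀ k, (rotAA Real.pi (u k)).trace = -1 := by
      intro k
      rw [rotAA_pi _ (hunit k), Matrix.trace_sub, Matrix.trace_smul, trace_vmv, hunit,
        Matrix.trace_one]
      norm_num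
    have hne1 : ∀ k, rotAA Real.pi (u k) ≠ 1 := by
      intro k h
      have h' := htr k
      rw [h, Matrix.trace_one] at h'
      norm_num at h'
    have hnejk : ∀ j k : Fin 3, j ≠ k → rotAA Real.pi (u j) ≠ rotAA Real.pi (u k) := by
      intro j k hjk h
      rw [rotAA_pi _ (hunit j), rotAA_pi _ (hunit k)] at h
      have hW : vecMulVec (u j) (u j) = vecMulVec (u k) (u k) := by
        ext i i'
        have h9 := congrFun (congrFun h i) i'
        simp only [Matrix.sub_apply, Matrix.smul_apply, smul_eq_mul] at h9
        have : (2:ℝ) * vecMulVec (u j) (u j) i i' = 2 * vecMulVec (u k) (u k) i i' := by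
          linarith
        linarith
      have h1 := dot_vmv (u j) (u j)
      rw [hW, dot_vmv] at h1
      rw [hortho k j, hortho j j] at h1
      simp [if_neg (Ne.symm hjk)] at h1
    have hUps : Upsilon M = insert 1 (insert (rotAA Real.pi (u 0))
        (insert (rotAA Real.pi (u 1)) {rotAA Real.pi (u 2)})) := by
      apply Set.eq_of_subset_of_subset
      · rintro A (hA1 | ⟨v, hv1, ⟨l, hl⟩, rfl⟩)
        · rw [Set.mem_singleton_iff] at hA1; subst hA1; exact Set.mem_insert _ _
        · set c : V3 := Qᵀ *ᵥ v with hcdef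
          have hvc : v = Q *ᵥ c := by rw [hcdef, Matrix.mulVec_mulVec, hQ', one_mulVec]
          have hDc : ∀ i, μ i * c i = l * c i := by
            have h4 : diagonal μ *ᵥ c = l • c := by
              have h6 : Qᵀ *ᵥ (M *ᵥ v) = Qᵀ *ᵥ (l • v) := by rw [hl]
              rw [Matrix.mulVec_smul, Matrix.mulVec_mulVec, hspec] at h6
              have h7 : Qᵀ * (Q * diagonal μ * Qᵀ) = diagonal μ * Qᵀ := by
                calc Qᵀ * (Q * diagonal μ * Qᵀ) = Qᵀ * (Q * (diagonal μ * Qᵀ)) := by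
                      rw [mul_assoc]
                  _ = diagonal μ * Qᵀ := hQpt _
              rw [h7, ← Matrix.mulVec_mulVec] at h6
              exact h6
            intro i
            have h8 := congrFun h4 i
            simpa [Matrix.mulVec_diagonal, smul_eq_mul] using h8
          have hcnorm : c ⬝ᵥ c = 1 := by
            calc c ⬝ᵥ c = c ⬝ᵥ (Qᵀ *ᵥ v) := by rw [← hcdef]
              _ = (c ᵥ* Qᵀ) ⬝ᵥ v := Matrix.dotProduct_mulVec _ _ _
              _ = (Q *ᵥ c) ⬝ᵥ v := by rw [Matrix.vecMul_transpose]
              _ = v ⬝ᵥ v := by rw [← hvc]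
              _ = 1 := hv1
          obtain ⟨k, hk⟩ : ∃ k, c k ≠ 0 := by
            by_contra hcc
            push_neg at hcc
            rw [show c ⬝ᵥ c = (0:ℝ) from by simp [dotProduct, Fin.sum_univ_three, hcc]] at hcnorm
            norm_num at hcnorm
          have hlk : l = μ k := by
            have h5 : (μ k - l) * c k = 0 := by linear_combination hDc k
            rcases mul_eq_zero.mp h5 with h | h
            · linarith [sub_eq_zero.mp h]
            · exact absurd h hk
          have hczero : ∀ i, i ≠ k → c i = 0 := by
            intro i hik
            have h5 : (μ i - l) * c i = 0 := by linear_combination hDc i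
            rcases mul_eq_zero.mp h5 with h | h
            · exact absurd (hdist (show μ i = μ k by rw [← hlk]; linarith [sub_eq_zero.mp h]))
                hik
            · exact h
          have hcs : c = c k • (Pi.single k 1 : V3) := by
            funext i
            rcases eq_or_ne i k with rfl | h
            · simp
            · simp [Pi.single_eq_of_ne h, hczero i h]
          have hvk : v = c k • u k := by
            have h10 : Q *ᵥ c = Q *ᵥ (c k • (Pi.single k 1 : V3)) := by rw [← hcs]
            rw [hvc, h10, Matrix.mulVec_smul, ← husingle]
          have hck : c k * c k = 1 := by
            have h8 : v ⬝ᵥ v = (c k * c k) * (u k ⬝ᵥ u k) := by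
              rw [hvk]
              simp [dotProduct, Fin.sum_univ_three, Pi.smul_apply, smul_eq_mul]
              ring
            rw [hv1, hunit, mul_one] at h8
            linarith
          have hre : rotAA Real.pi v = rotAA Real.pi (u k) := by
            rw [rotAA_pi v hv1, rotAA_pi _ (hunit k), hvk]
            have h9 : vecMulVec (c k • u k) (c k • u k) = vecMulVec (u k) (u k) := by
              ext i j
              simp only [vecMulVec_apply, Pi.smul_apply, smul_eq_mul]
              linear_combination (u k i * u k j) * hck
            rw [h9]
          rw [hre]
          fin_cases k
          · exact Set.mem_insert_of_mem _ (Set.mem_insert _ _)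
          · exact Set.mem_insert_of_mem _ (Set.mem_insert_of_mem _ (Set.mem_insert _ _))
          · exact Set.mem_insert_of_mem _ (Set.mem_insert_of_mem _
              (Set.mem_insert_of_mem _ rfl))
      · intro A hA
        simp only [Set.mem_insert_iff, Set.mem_singleton_iff] at hA
        rcases hA with rfl | rfl | rfl | rfl
        · exact Or.inl rfl
        · exact Or.inr ⟨u 0, hunit 0, ⟨μ 0, heig 0⟩, rfl⟩
        · exact Or.inr ⟨u 1, hunit 1, ⟨μ 1, heig 1⟩, rfl⟩
        · exact Or.inr ⟨u 2, hunit 2, ⟨μ 2, heig 2⟩, rfl⟩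
    rw [hUps]
    rw [Set.ncard_insert_of_notMem (by
        simp only [Set.mem_insert_iff, Set.mem_singleton_iff]
        push_neg
        exact ⟨Ne.symm (hne1 0), Ne.symm (hne1 1), Ne.symm (hne1 2)⟩),
      Set.ncard_insert_of_notMem (by
        simp only [Set.mem_insert_iff, Set.mem_singleton_iff]
        push_neg
        exact ⟨hnejk 0 1 (by decide), hnejk 0 2 (by decide)⟩),
      Set.ncard_insert_of_notMem (by
        simp only [Set.mem_singleton_iff]
        exact hnejk 1 2 (by decide)),
      Set.ncard_singleton]
end
end

section
/- Let M ∈ ℝ^{3×3} be symmetric positive semi-definite with three distinct eigenvalues and k_R > 0. Let R̃ : [0, ∞) → SO(3) be differentiable with R̃'(t) = −2 k_R R̃(t)[ψ(M R̃(t))]^× for all t ≥ 0. Then R̃(t) converges to the set of equilibria Υ := {I₃} ∪ {ℛ_α(π, v) : v ∈ 𝕊², M v = λ v for some λ ∈ ℝ}, i.e., the infimum distance from R̃(t) to Υ (in the Frobenius norm) tends to 0 as t → ∞. -/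
open Matrix Real Filter

noncomputable section

/-! ### Auxiliary lemmas -/

section Aux

set_option maxHeartbeats 1000000 in
lemma trace_identity (M R : M3) (kR : ℝ) :
    (M * ((-(2 * kR)) • (R * skew (psi (M * R))))).trace
      = 4 * kR * (psi (M * R) ⬝ᵥ psi (M * R)) := by
  simp [Matrix.trace, Matrix.diag, Matrix.mul_apply, skew, psi, dotProduct,
    Fin.sum_univ_three, Matrix.smul_apply]
  ring

lemma hasDerivAt_trace_mul (A : M3) (X : ℝ → M3) (X' : M3) (t : ℝ)
    (h : HasMatDerivAt X X' t) :
    HasDerivAt (fun s => (A * X s).trace) ((A * X').trace) t := by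
  have e : ∀ Y : M3, (A * Y).trace = ∑ i : Fin 3, ∑ j : Fin 3, A i j * Y j i := by
    intro Y
    simp only [Matrix.trace, Matrix.diag, Matrix.mul_apply]
  simp only [e]
  exact HasDerivAt.fun_sum fun i _ => HasDerivAt.fun_sum fun j _ => (h j i).const_mul _

lemma hasDerivAt_entry_mul (A : M3) (X : ℝ → M3) (X' : M3) (t : ℝ)
    (h : HasMatDerivAt X X' t) (i j : Fin 3) :
    HasDerivAt (fun s => (A * X s) i j) ((A * X') i j) t := by
  simp only [Matrix.mul_apply]
  exact HasDerivAt.fun_sum fun k _ => (h k j).const_mul _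

lemma hasDerivAt_psi_entry (A : M3) (X : ℝ → M3) (X' : M3) (t : ℝ)
    (h : HasMatDerivAt X X' t) (i : Fin 3) :
    HasDerivAt (fun s => psi (A * X s) i) (psi (A * X') i) t := by
  fin_cases i <;>
  · simp only [psi, Matrix.cons_val_zero, Matrix.cons_val_one, Matrix.head_cons,
      Matrix.cons_val_two, Matrix.tail_cons, Fin.isValue]
    exact ((hasDerivAt_entry_mul A X X' t h _ _).sub
      (hasDerivAt_entry_mul A X X' t h _ _)).div_const 2

lemma hasDerivAt_psi_dot (A : M3) (X : ℝ → M3) (X' : M3) (t : ℝ)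
    (h : HasMatDerivAt X X' t) :
    HasDerivAt (fun s => psi (A * X s) ⬝ᵥ psi (A * X s))
      (2 * (psi (A * X t) ⬝ᵥ psi (A * X'))) t := by
  have e : ∀ x y : V3, x ⬝ᵥ y = ∑ i : Fin 3, x i * y i := fun _ _ => rfl
  simp only [e, Finset.mul_sum]
  exact HasDerivAt.fun_sum (A' := fun i => 2 * (psi (A * X t) i * psi (A * X') i)) fun i _ => by
    have := (hasDerivAt_psi_entry A X X' t h i).fun_mul (hasDerivAt_psi_entry A X X' t h i)
    exact this.congr_deriv (by ring)

lemma SO3.entry_le (R : M3) (h : Rᵀ * R = 1) (i j : Fin 3) : R i j ^ 2 ≤ 1 := by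
  have h1 := congrFun (congrFun h j) j
  simp [Matrix.mul_apply, Matrix.one_apply, Fin.sum_univ_three] at h1
  have h0 : R 0 j ^ 2 ≤ 1 := by nlinarith [sq_nonneg (R 1 j), sq_nonneg (R 2 j)]
  have h2 : R 1 j ^ 2 ≤ 1 := by nlinarith [sq_nonneg (R 0 j), sq_nonneg (R 2 j)]
  have h3 : R 2 j ^ 2 ≤ 1 := by nlinarith [sq_nonneg (R 0 j), sq_nonneg (R 1 j)]
  fin_cases i
  exacts [h0, h2, h3]

lemma SO3.abs_entry_le (R : M3) (h : Rᵀ * R = 1) (i j : Fin 3) : |R i j| ≤ 1 := by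
  have := SO3.entry_le R h i j
  nlinarith [abs_nonneg (R i j), sq_abs (R i j)]

/-! Continuity lemmas -/

lemma cont_entry (i j : Fin 3) : Continuous fun R : M3 => R i j :=
  (continuous_apply j).comp (continuous_apply i)

lemma cont_mul_entry' (A : M3) (F : M3 → M3) (hF : ∀ i j, Continuous fun R => F R i j)
    (i j : Fin 3) : Continuous fun R : M3 => (A * F R) i j := by
  simp only [Matrix.mul_apply]
  exact continuous_finset_sum _ fun k _ => continuous_const.mul (hF k j)

lemma cont_psi_entry' (A : M3) (F : M3 → M3) (hF : ∀ i j, Continuous fun R => F R i j)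
    (i : Fin 3) : Continuous fun R : M3 => psi (A * F R) i := by
  fin_cases i <;>
  · simp only [psi, Matrix.cons_val_zero, Matrix.cons_val_one, Matrix.head_cons,
      Matrix.cons_val_two, Matrix.tail_cons, Fin.isValue]
    exact ((cont_mul_entry' A F hF _ _).sub (cont_mul_entry' A F hF _ _)).div_const 2

lemma cont_psi_entry (A : M3) (i : Fin 3) : Continuous fun R : M3 => psi (A * R) i :=
  cont_psi_entry' A id (fun i j => cont_entry i j) i

lemma cont_skew_entry (A : M3) (k j : Fin 3) :
    Continuous fun R : M3 => skew (psi (A * R)) k j := by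
  fin_cases k <;> fin_cases j <;> simp [skew] <;>
    first
      | exact continuous_const
      | exact cont_psi_entry A _
      | exact (cont_psi_entry A _).neg
      | exact continuous_neg.comp (cont_psi_entry A _)

lemma cont_deriv_formula (A : M3) (kR : ℝ) (i j : Fin 3) :
    Continuous fun R : M3 => ((-(2 * kR)) • (R * skew (psi (A * R)))) i j := by
  simp only [Matrix.smul_apply, Matrix.mul_apply, smul_eq_mul]
  exact continuous_const.mul <| continuous_finset_sum _ fun k _ =>
    (cont_entry i k).mul (cont_skew_entry A k j)

lemma cont_F (A : M3) : Continuous fun R : M3 => psi (A * R) ⬝ᵥ psi (A * R) := by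
  have e : ∀ x : V3, x ⬝ᵥ x = ∑ i : Fin 3, x i * x i := fun _ => rfl
  simp only [e]
  exact continuous_finset_sum _ fun i _ => (cont_psi_entry A i).mul (cont_psi_entry A i)

lemma cont_G (A : M3) (kR : ℝ) :
    Continuous fun R : M3 =>
      2 * (psi (A * R) ⬝ᵥ psi (A * ((-(2 * kR)) • (R * skew (psi (A * R)))))) := by
  have e : ∀ x y : V3, x ⬝ᵥ y = ∑ i : Fin 3, x i * y i := fun _ _ => rfl
  simp only [e]
  refine continuous_const.mul (continuous_finset_sum _ fun i _ => ?_)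
  exact (cont_psi_entry A i).mul
    (cont_psi_entry' A (fun R => (-(2 * kR)) • (R * skew (psi (A * R))))
      (fun a b => cont_deriv_formula A kR a b) i)

lemma cont_frob_sub (B : M3) : Continuous fun A : M3 => frob (A - B) := by
  have e : ∀ X : M3, (Xᵀ * X).trace = ∑ i : Fin 3, ∑ j : Fin 3, X j i * X j i := by
    intro X
    simp only [Matrix.trace, Matrix.diag, Matrix.mul_apply, Matrix.transpose_apply]
  have : Continuous fun A : M3 => (((A - B)ᵀ * (A - B)).trace) := by
    simp only [e]
    refine continuous_finset_sum _ fun i _ => continuous_finset_sum _ fun j _ => ?_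
    have hc : Continuous fun A : M3 => (A - B) j i := by
      have : (fun A : M3 => (A - B) j i) = fun A : M3 => A j i - B j i := rfl
      rw [this]
      exact (cont_entry j i).sub continuous_const
    exact hc.mul hc
  exact Real.continuous_sqrt.comp this

lemma frob_nonneg (A : M3) : 0 ≤ frob A := Real.sqrt_nonneg _

/-! Compactness of SO(3) -/

lemma so3_closed : IsClosed {R : M3 | SO3 R} := by
  have h1 : IsClosed {R : M3 | Rᵀ * R = 1} := by
    have : Continuous fun R : M3 => Rᵀ * R := by
      apply continuous_matrix
      intro i j
      simp only [Matrix.mul_apply, Matrix.transpose_apply]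
      exact continuous_finset_sum _ fun k _ => (cont_entry k i).mul (cont_entry k j)
    exact isClosed_eq this continuous_const
  have h2 : IsClosed {R : M3 | R.det = 1} := by
    have hbig : Continuous fun R : M3 => R 0 0 * (R 1 1 * R 2 2) - R 0 0 * (R 1 2 * R 2 1)
        - R 0 1 * (R 1 0 * R 2 2) + R 0 1 * (R 1 2 * R 2 0) + R 0 2 * (R 1 0 * R 2 1)
        - R 0 2 * (R 1 1 * R 2 0) :=
      ((((((cont_entry 0 0).mul ((cont_entry 1 1).mul (cont_entry 2 2))).sub
        ((cont_entry 0 0).mul ((cont_entry 1 2).mul (cont_entry 2 1)))).sub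
        ((cont_entry 0 1).mul ((cont_entry 1 0).mul (cont_entry 2 2)))).add
        ((cont_entry 0 1).mul ((cont_entry 1 2).mul (cont_entry 2 0)))).add
        ((cont_entry 0 2).mul ((cont_entry 1 0).mul (cont_entry 2 1)))).sub
        ((cont_entry 0 2).mul ((cont_entry 1 1).mul (cont_entry 2 0)))
    have : Continuous fun R : M3 => R.det := by
      simp only [Matrix.det_fin_three]
      exact hbig.congr fun R => by ring
    exact isClosed_eq this continuous_const
  exact h1.inter h2

lemma so3_compact : IsCompact {R : M3 | SO3 R} := by
  have hcomp : IsCompact (Set.pi Set.univ fun _ : Fin 3 =>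
      Set.pi Set.univ fun _ : Fin 3 => Set.Icc (-1 : ℝ) 1) :=
    isCompact_univ_pi fun _ => isCompact_univ_pi fun _ => isCompact_Icc
  refine hcomp.of_isClosed_subset so3_closed ?_
  intro R hR
  simp only [Set.mem_pi, Set.mem_univ, Set.mem_Icc, true_implies]
  intro i j
  have := SO3.entry_le R hR.1 i j
  constructor <;> nlinarith

/-! Classification of critical points -/

lemma scalar_key (l0 l1 l2 q00 q01 q02 q10 q11 q12 q20 q21 q22 : ℝ)
    (rel01 : l0 * q01 = l1 * q10) (rel02 : l0 * q02 = l2 * q20) (rel12 : l1 * q12 = l2 * q21)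
    (row0 : q00^2 + q01^2 + q02^2 = 1) (row1 : q10^2 + q11^2 + q12^2 = 1)
    (col0 : q00^2 + q10^2 + q20^2 = 1) (col1 : q01^2 + q11^2 + q21^2 = 1)
    (h01 : l1^2 < l0^2) (h02 : l2^2 < l0^2) (h12 : l2^2 < l1^2) :
    q01 = 0 ∧ q02 = 0 ∧ q10 = 0 ∧ q12 = 0 ∧ q20 = 0 ∧ q21 = 0 := by
  have sq01 : l0^2 * q01^2 = l1^2 * q10^2 := by
    have h := congrArg (fun x => x ^ 2) rel01; simp only [mul_pow] at h; exact h
  have sq02 : l0^2 * q02^2 = l2^2 * q20^2 := by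
    have h := congrArg (fun x => x ^ 2) rel02; simp only [mul_pow] at h; exact h
  have sq12 : l1^2 * q12^2 = l2^2 * q21^2 := by
    have h := congrArg (fun x => x ^ 2) rel12; simp only [mul_pow] at h; exact h
  have key0 : (l0^2 - l1^2) * q10^2 + (l0^2 - l2^2) * q20^2 = 0 := by
    linear_combination l0^2 * col0 - l0^2 * row0 + sq01 + sq02
  have n1 : 0 ≤ (l0^2 - l1^2) * q10^2 := mul_nonneg (sub_pos.mpr h01).le (sq_nonneg _)
  have n2 : 0 ≤ (l0^2 - l2^2) * q20^2 := mul_nonneg (sub_pos.mpr h02).le (sq_nonneg _)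
  have z1 : (l0^2 - l1^2) * q10^2 = 0 := by linarith
  have z2 : (l0^2 - l2^2) * q20^2 = 0 := by linarith
  have h10 : q10 = 0 := by
    have := (mul_eq_zero.mp z1).resolve_left (by intro h; nlinarith)
    exact pow_eq_zero_iff (n := 2) (by norm_num) |>.mp this
  have h20 : q20 = 0 := by
    have := (mul_eq_zero.mp z2).resolve_left (by intro h; nlinarith)
    exact pow_eq_zero_iff (n := 2) (by norm_num) |>.mp this
  have hl0 : l0 ≠ 0 := by intro h; rw [h] at h02; nlinarith [sq_nonneg l2]
  have h01' : q01 = 0 := by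
    have h : l0 * q01 = 0 := by rw [rel01, h10, mul_zero]
    exact (mul_eq_zero.mp h).resolve_left hl0
  have h02' : q02 = 0 := by
    have h : l0 * q02 = 0 := by rw [rel02, h20, mul_zero]
    exact (mul_eq_zero.mp h).resolve_left hl0
  have key1 : (l1^2 - l2^2) * q21^2 = 0 := by
    have hq01 : q01^2 = 0 := by rw [h01']; ring
    have hq10 : q10^2 = 0 := by rw [h10]; ring
    linear_combination l1^2 * col1 - l1^2 * hq01 - (l1^2 * row1 - l1^2 * hq10) + sq12
  have h21 : q21 = 0 := by
    have := (mul_eq_zero.mp key1).resolve_left (by intro h; nlinarith)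
    exact pow_eq_zero_iff (n := 2) (by norm_num) |>.mp this
  have hl1 : l1 ≠ 0 := by intro h; rw [h] at h12; nlinarith [sq_nonneg l2]
  have h12' : q12 = 0 := by
    have h : l1 * q12 = 0 := by rw [rel12, h21, mul_zero]
    exact (mul_eq_zero.mp h).resolve_left hl1
  exact ⟨h01', h02', h10, h12', h20, h21⟩

lemma Q_diag (lam : V3) (hl : ∀ i j : Fin 3, i ≠ j → lam i ^ 2 ≠ lam j ^ 2)
    (Q : M3) (hQtQ : Qᵀ * Q = 1) (hQQt : Q * Qᵀ = 1)
    (hc : Matrix.diagonal lam * Q = Qᵀ * Matrix.diagonal lam) :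
    Q 0 1 = 0 ∧ Q 0 2 = 0 ∧ Q 1 0 = 0 ∧ Q 1 2 = 0 ∧ Q 2 0 = 0 ∧ Q 2 1 = 0 := by
  have rel : ∀ i j : Fin 3, lam i * Q i j = lam j * Q j i := by
    intro i j
    have h := congrFun (congrFun hc i) j
    rw [Matrix.diagonal_mul, Matrix.mul_diagonal, Matrix.transpose_apply] at h
    linear_combination h
  have row : ∀ i : Fin 3, Q i 0 ^ 2 + Q i 1 ^ 2 + Q i 2 ^ 2 = 1 := by
    intro i
    have h := congrFun (congrFun hQQt i) i
    simp [Matrix.mul_apply, Matrix.transpose_apply, Fin.sum_univ_three, Matrix.one_apply] at h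
    linear_combination h
  have col : ∀ j : Fin 3, Q 0 j ^ 2 + Q 1 j ^ 2 + Q 2 j ^ 2 = 1 := by
    intro j
    have h := congrFun (congrFun hQtQ j) j
    simp [Matrix.mul_apply, Matrix.transpose_apply, Fin.sum_univ_three, Matrix.one_apply] at h
    linear_combination h
  have d01 := hl 0 1 (by decide)
  have d02 := hl 0 2 (by decide)
  have d12 := hl 1 2 (by decide)
  rcases lt_trichotomy (lam 0 ^ 2) (lam 1 ^ 2) with h1 | h1 | h1
  · rcases lt_trichotomy (lam 0 ^ 2) (lam 2 ^ 2) with h2 | h2 | h2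
    · rcases lt_trichotomy (lam 1 ^ 2) (lam 2 ^ 2) with h3 | h3 | h3
      · obtain ⟨e1, e2, e3, e4, e5, e6⟩ := scalar_key (lam 2) (lam 1) (lam 0)
          (Q 2 2) (Q 2 1) (Q 2 0) (Q 1 2) (Q 1 1) (Q 1 0) (Q 0 2) (Q 0 1) (Q 0 0)
          (rel 2 1) (rel 2 0) (rel 1 0)
          (by linarith [row 2]) (by linarith [row 1]) (by linarith [col 2]) (by linarith [col 1])
          h3 h2 h1
        exact ⟨e6, e5, e4, e3, e2, e1⟩
      · exact absurd h3 d12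
      · obtain ⟨e1, e2, e3, e4, e5, e6⟩ := scalar_key (lam 1) (lam 2) (lam 0)
          (Q 1 1) (Q 1 2) (Q 1 0) (Q 2 1) (Q 2 2) (Q 2 0) (Q 0 1) (Q 0 2) (Q 0 0)
          (rel 1 2) (rel 1 0) (rel 2 0)
          (by linarith [row 1]) (by linarith [row 2]) (by linarith [col 1]) (by linarith [col 2])
          h3 h1 h2
        exact ⟨e5, e6, e2, e1, e4, e3⟩
    · exact absurd h2 d02
    · obtain ⟨e1, e2, e3, e4, e5, e6⟩ := scalar_key (lam 1) (lam 0) (lam 2)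
        (Q 1 1) (Q 1 0) (Q 1 2) (Q 0 1) (Q 0 0) (Q 0 2) (Q 2 1) (Q 2 0) (Q 2 2)
        (rel 1 0) (rel 1 2) (rel 0 2)
        (by linarith [row 1]) (by linarith [row 0]) (by linarith [col 1]) (by linarith [col 0])
        h1 (by linarith) h2
      exact ⟨e3, e4, e1, e2, e6, e5⟩
  · exact absurd h1 d01
  · rcases lt_trichotomy (lam 1 ^ 2) (lam 2 ^ 2) with h2 | h2 | h2
    · rcases lt_trichotomy (lam 0 ^ 2) (lam 2 ^ 2) with h3 | h3 | h3
      · obtain ⟨e1, e2, e3, e4, e5, e6⟩ := scalar_key (lam 2) (lam 0) (lam 1)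
          (Q 2 2) (Q 2 0) (Q 2 1) (Q 0 2) (Q 0 0) (Q 0 1) (Q 1 2) (Q 1 0) (Q 1 1)
          (rel 2 0) (rel 2 1) (rel 0 1)
          (by linarith [row 2]) (by linarith [row 0]) (by linarith [col 2]) (by linarith [col 0])
          h3 h2 h1
        exact ⟨e4, e3, e6, e5, e1, e2⟩
      · exact absurd h3 d02
      · obtain ⟨e1, e2, e3, e4, e5, e6⟩ := scalar_key (lam 0) (lam 2) (lam 1)
          (Q 0 0) (Q 0 2) (Q 0 1) (Q 2 0) (Q 2 2) (Q 2 1) (Q 1 0) (Q 1 2) (Q 1 1)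
          (rel 0 2) (rel 0 1) (rel 2 1)
          (by linarith [row 0]) (by linarith [row 2]) (by linarith [col 0]) (by linarith [col 2])
          h3 h1 h2
        exact ⟨e2, e1, e5, e6, e3, e4⟩
    · exact absurd h2 d12
    · obtain ⟨e1, e2, e3, e4, e5, e6⟩ := scalar_key (lam 0) (lam 1) (lam 2)
        (Q 0 0) (Q 0 1) (Q 0 2) (Q 1 0) (Q 1 1) (Q 1 2) (Q 2 0) (Q 2 1) (Q 2 2)
        (rel 0 1) (rel 0 2) (rel 1 2)
        (by linarith [row 0]) (by linarith [row 1]) (by linarith [col 0]) (by linarith [col 1])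
        h1 (by linarith) h2
      exact ⟨e1, e2, e3, e4, e5, e6⟩

end Aux

section Classification

lemma crit_mem_Upsilon (M : M3) (hsym : Mᵀ = M) (hpsd : M.PosSemidef)
    (hdist : Function.Injective hpsd.1.eigenvalues)
    (R : M3) (hR : SO3 R) (hpsi : psi (M * R) = 0) : R ∈ Upsilon M := by
  set E : M3 := (Matrix.IsHermitian.eigenvectorUnitary hpsd.1 : M3) with hE
  set lam : V3 := hpsd.1.eigenvalues with hlam
  have hspec : M = E * Matrix.diagonal lam * Eᵀ := by
    simpa [Matrix.star_eq_conjTranspose] using hpsd.1.spectral_theorem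
  have hEu := (Matrix.IsHermitian.eigenvectorUnitary hpsd.1).2
  rw [Unitary.mem_iff] at hEu
  have hEtE : Eᵀ * E = 1 := by
    have h1 := hEu.1
    rwa [Matrix.star_eq_conjTranspose, Matrix.conjTranspose_eq_transpose_of_trivial] at h1
  have hEEt : E * Eᵀ = 1 := by
    have h2 := hEu.2
    rwa [Matrix.star_eq_conjTranspose, Matrix.conjTranspose_eq_transpose_of_trivial] at h2
  have hRtR : Rᵀ * R = 1 := hR.1
  have hRRt : R * Rᵀ = 1 := by rw [mul_eq_one_comm] at hRtR; exact hRtR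
  -- cancellation helpers
  have cEtE : ∀ X : M3, Eᵀ * (E * X) = X := fun X => by
    rw [← Matrix.mul_assoc, hEtE, Matrix.one_mul]
  have cEEt : ∀ X : M3, E * (Eᵀ * X) = X := fun X => by
    rw [← Matrix.mul_assoc, hEEt, Matrix.one_mul]
  have cRtR : ∀ X : M3, Rᵀ * (R * X) = X := fun X => by
    rw [← Matrix.mul_assoc, hRtR, Matrix.one_mul]
  -- M*R symmetric
  have hMRsym : M * R = Rᵀ * M := by
    have h0 := congrFun hpsi 0
    have h1 := congrFun hpsi 1
    have h2 := congrFun hpsi 2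
    simp [psi] at h0 h1 h2
    have hT : (M * R)ᵀ = M * R := by
      ext i j
      fin_cases i <;> fin_cases j <;> simp [Matrix.transpose_apply] <;> linarith
    calc M * R = (M * R)ᵀ := hT.symm
      _ = Rᵀ * Mᵀ := by rw [Matrix.transpose_mul]
      _ = Rᵀ * M := by rw [hsym]
  set Q : M3 := Eᵀ * R * E with hQ
  have hREQ : R = E * Q * Eᵀ := by
    rw [hQ]
    calc R = (E * Eᵀ) * R * (E * Eᵀ) := by rw [hEEt]; simp [Matrix.mul_assoc]
      _ = E * (Eᵀ * R * E) * Eᵀ := by simp only [Matrix.mul_assoc]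
  have hQtQ : Qᵀ * Q = 1 := by
    rw [hQ]
    simp only [Matrix.transpose_mul, Matrix.transpose_transpose, Matrix.mul_assoc]
    rw [cEEt (R * E), cRtR E]
    exact hEtE
  have hQQt : Q * Qᵀ = 1 := by rw [mul_eq_one_comm] at hQtQ; exact hQtQ
  have hdiagE : Matrix.diagonal lam = Eᵀ * (M * E) := by
    rw [hspec]
    simp only [Matrix.mul_assoc]
    rw [cEtE (Matrix.diagonal lam * (Eᵀ * E)), hEtE, Matrix.mul_one]
  have hcomm : Matrix.diagonal lam * Q = Qᵀ * Matrix.diagonal lam := by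
    rw [hQ, hdiagE]
    simp only [Matrix.transpose_mul, Matrix.transpose_transpose, Matrix.mul_assoc]
    rw [cEEt (R * E), cEEt (M * E)]
    rw [show M * (R * E) = (M * R) * E from (Matrix.mul_assoc _ _ _).symm, hMRsym]
    simp only [Matrix.mul_assoc]
  have hlnn : ∀ i, 0 ≤ lam i := fun i => hpsd.eigenvalues_nonneg i
  have hl2 : ∀ i j : Fin 3, i ≠ j → lam i ^ 2 ≠ lam j ^ 2 := by
    intro i j hij h
    have : lam i = lam j := by
      nlinarith [hlnn i, hlnn j, sq_nonneg (lam i - lam j), sq_nonneg (lam i + lam j)]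
    exact hij (hdist this)
  obtain ⟨z01, z02, z10, z12, z20, z21⟩ := Q_diag lam hl2 Q hQtQ hQQt hcomm
  have row : ∀ i : Fin 3, Q i 0 ^ 2 + Q i 1 ^ 2 + Q i 2 ^ 2 = 1 := by
    intro i
    have h := congrFun (congrFun hQQt i) i
    simp [Matrix.mul_apply, Matrix.transpose_apply, Fin.sum_univ_three, Matrix.one_apply] at h
    linear_combination h
  have hd0 : Q 0 0 = 1 ∨ Q 0 0 = -1 := by
    have hr := row 0; rw [z01, z02] at hr
    have h : (Q 0 0 - 1) * (Q 0 0 + 1) = 0 := by linear_combination hr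
    rcases mul_eq_zero.mp h with h | h
    · left; linarith
    · right; linarith
  have hd1 : Q 1 1 = 1 ∨ Q 1 1 = -1 := by
    have hr := row 1; rw [z10, z12] at hr
    have h : (Q 1 1 - 1) * (Q 1 1 + 1) = 0 := by linear_combination hr
    rcases mul_eq_zero.mp h with h | h
    · left; linarith
    · right; linarith
  have hd2 : Q 2 2 = 1 ∨ Q 2 2 = -1 := by
    have hr := row 2; rw [z20, z21] at hr
    have h : (Q 2 2 - 1) * (Q 2 2 + 1) = 0 := by linear_combination hr
    rcases mul_eq_zero.mp h with h | h
    · left; linarith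
    · right; linarith
  have hdetQ : Q.det = 1 := by
    have hdetE : E.det * E.det = 1 := by
      have := congrArg Matrix.det hEtE
      rwa [Matrix.det_mul, Matrix.det_transpose, Matrix.det_one] at this
    calc Q.det = Eᵀ.det * R.det * E.det := by rw [hQ, Matrix.det_mul, Matrix.det_mul]
      _ = (E.det * E.det) * R.det := by rw [Matrix.det_transpose]; ring
      _ = 1 := by rw [hdetE, hR.2, one_mul]
  have hdet3 : Q 0 0 * Q 1 1 * Q 2 2 = 1 := by
    have h := Matrix.det_fin_three Q
    rw [z01, z02, z10, z12, z20, z21, hdetQ] at h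
    linarith [h]
  -- helpers for the eigen-case
  have hME : M * E = E * Matrix.diagonal lam := by
    rw [hspec]
    simp only [Matrix.mul_assoc]
    rw [show Eᵀ * E = 1 from hEtE, Matrix.mul_one]
  have hcase : ∀ a : Fin 3,
      Q = (2:ℝ) • Matrix.diagonal (Pi.single a (1:ℝ)) - 1 → R ∈ Upsilon M := by
    intro a hQd
    set v : V3 := fun k => E k a with hv
    have hvv : v ⬝ᵥ v = 1 := by
      have h := congrFun (congrFun hEtE a) a
      simp [Matrix.mul_apply, Matrix.transpose_apply, Fin.sum_univ_three,
        Matrix.one_apply] at h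
      simp [dotProduct, Fin.sum_univ_three, hv]
      linarith [h]
    have hMv : M *ᵥ v = lam a • v := by
      funext i
      have h := congrFun (congrFun hME i) a
      rw [Matrix.mul_diagonal] at h
      simp only [Matrix.mul_apply] at h
      simp only [Matrix.mulVec, dotProduct, hv, Pi.smul_apply, smul_eq_mul]
      rw [h]; ring
    have hEDE : E * Matrix.diagonal (Pi.single a (1:ℝ)) * Eᵀ = vecMulVec v v := by
      ext i j
      simp only [Matrix.mul_apply, Matrix.mul_diagonal, Matrix.transpose_apply,
        Matrix.vecMulVec_apply, Fin.sum_univ_three, hv]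
      fin_cases a <;> simp [Pi.single_apply] <;> ring
    have hRform : R = (2:ℝ) • vecMulVec v v - 1 := by
      rw [hREQ, hQd]
      rw [Matrix.mul_sub, Matrix.sub_mul, Matrix.mul_one, hEEt]
      rw [Matrix.mul_smul, Matrix.smul_mul, hEDE]
    right
    exact ⟨v, hvv, ⟨lam a, hMv⟩, by rw [rotAA_pi v hvv, hRform]⟩
  rcases hd0 with h0 | h0 <;> rcases hd1 with h1 | h1 <;> rcases hd2 with h2 | h2
  · -- (1,1,1) : Q = 1
    have hQ1 : Q = 1 := by
      ext i j
      fin_cases i <;> fin_cases j <;>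
        simp [Matrix.one_apply, z01, z02, z10, z12, z20, z21, h0, h1, h2]
    left
    have : R = E * Eᵀ := by rw [hREQ, hQ1, Matrix.mul_one]
    rw [this, hEEt]
    rfl
  · exfalso; rw [h0, h1, h2] at hdet3; norm_num at hdet3
  · exfalso; rw [h0, h1, h2] at hdet3; norm_num at hdet3
  · -- (1,-1,-1) : a = 0
    refine hcase 0 ?_
    ext i j
    fin_cases i <;> fin_cases j <;>
      simp [Matrix.diagonal, Matrix.one_apply, Pi.single_apply, z01, z02, z10, z12, z20, z21,
        h0, h1, h2] <;> norm_num
  · exfalso; rw [h0, h1, h2] at hdet3; norm_num at hdet3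
  · -- (-1,1,-1) : a = 1
    refine hcase 1 ?_
    ext i j
    fin_cases i <;> fin_cases j <;>
      simp [Matrix.diagonal, Matrix.one_apply, Pi.single_apply, z01, z02, z10, z12, z20, z21,
        h0, h1, h2] <;> norm_num
  · -- (-1,-1,1) : a = 2
    refine hcase 2 ?_
    ext i j
    fin_cases i <;> fin_cases j <;>
      simp [Matrix.diagonal, Matrix.one_apply, Pi.single_apply, z01, z02, z10, z12, z20, z21,
        h0, h1, h2] <;> norm_num
  · exfalso; rw [h0, h1, h2] at hdet3; norm_num at hdet3

end Classification

instance : FirstCountableTopology M3 :=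
  inferInstanceAs (FirstCountableTopology (Fin 3 → Fin 3 → ℝ))

/-- every solution of the unforced attitude error dynamics converges to the
    set of equilibria Υ (infimum Frobenius distance to Υ tends to 0). -/
theorem convergence_to_equilibria (M : M3) (hsym : Mᵀ = M) (hpsd : M.PosSemidef)
    (hdist : Function.Injective hpsd.1.eigenvalues) (kR : ℝ) (hkR : 0 < kR)
    (Rtil : ℝ → M3) (hSO3 : ∀ t, 0 ≤ t → SO3 (Rtil t))
    (hdyn : ∀ t, 0 ≤ t →
      HasMatDerivAt Rtil ((-(2 * kR)) • (Rtil t * skew (psi (M * Rtil t)))) t) :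
    Filter.Tendsto (fun t => sInf ((fun A => frob (Rtil t - A)) '' Upsilon M))
      Filter.atTop (nhds 0) := by
  classical
  set F : M3 → ℝ := fun R => psi (M * R) ⬝ᵥ psi (M * R) with hF
  set G : M3 → ℝ := fun R =>
    2 * (psi (M * R) ⬝ᵥ psi (M * ((-(2 * kR)) • (R * skew (psi (M * R)))))) with hG
  set g : ℝ → ℝ := fun t => F (Rtil t) with hgdef
  set V : ℝ → ℝ := fun t => (M * (1 - Rtil t)).trace with hVdef
  have hgnn : ∀ t, 0 ≤ g t := fun t =>
    Finset.sum_nonneg fun i _ => mul_self_nonneg _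
  -- derivative of V
  have hVderiv : ∀ t, 0 ≤ t → HasDerivAt V (-(4 * kR * g t)) t := by
    intro t ht
    have h1 : HasDerivAt (fun s => (M * Rtil s).trace)
        ((M * ((-(2 * kR)) • (Rtil t * skew (psi (M * Rtil t))))).trace) t :=
      hasDerivAt_trace_mul M Rtil _ t (hdyn t ht)
    have h2 := h1.const_sub ((M * (1 : M3)).trace)
    rw [trace_identity M (Rtil t) kR] at h2
    have hVe : V = fun s => (M * (1 : M3)).trace - (M * Rtil s).trace := by
      funext s
      simp only [hVdef]
      rw [Matrix.mul_sub, Matrix.trace_sub]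
    rw [hVe]
    exact h2
  -- derivative of g
  have hgderiv : ∀ t, 0 ≤ t → HasDerivAt g (G (Rtil t)) t := by
    intro t ht
    exact hasDerivAt_psi_dot M Rtil _ t (hdyn t ht)
  -- bound on the derivative of g
  have hso3one : (1 : M3) ∈ {R : M3 | SO3 R} := by
    constructor
    · rw [Matrix.transpose_one, Matrix.one_mul]
    · exact Matrix.det_one
  obtain ⟨R₀, hR₀, hCmax⟩ :=
    so3_compact.exists_isMaxOn ⟨(1 : M3), hso3one⟩
      (continuous_abs.comp (cont_G M kR)).continuousOn
  set C : ℝ := |G R₀| + 1 with hC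
  have hCpos : 0 < C := by positivity
  have hGb0 : ∀ t, 0 ≤ t → |G (Rtil t)| ≤ |G R₀| := fun t ht => hCmax (hSO3 t ht)
  have hGbound : ∀ t, 0 ≤ t → |G (Rtil t)| ≤ C := fun t ht =>
    le_trans (hGb0 t ht) (by rw [hC]; linarith)
  -- Lipschitz bound for g on [0,∞)
  have hlip : ∀ s t : ℝ, 0 ≤ s → 0 ≤ t → |g t - g s| ≤ C * |t - s| := by
    intro s t hs ht
    have := Convex.norm_image_sub_le_of_norm_hasDerivWithin_le
      (f := g) (f' := fun u => G (Rtil u)) (C := C) (s := Set.Ici (0:ℝ))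
      (fun u hu => (hgderiv u hu).hasDerivWithinAt)
      (fun u hu => by simpa [Real.norm_eq_abs] using hGbound u hu)
      (convex_Ici 0) hs ht
    simpa [Real.norm_eq_abs] using this
  -- decay estimate
  have decay : ∀ a b : ℝ, 0 ≤ a → a ≤ b → ∀ c : ℝ,
      (∀ u ∈ Set.Icc a b, c ≤ 4 * kR * g u) → V b + c * b ≤ V a + c * a := by
    intro a b ha hab c hc
    set W : ℝ → ℝ := fun u => V u + c * u with hW
    have hWd : ∀ u ∈ Set.Icc a b, HasDerivAt W (-(4 * kR * g u) + c) u := by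
      intro u hu
      have h1 : HasDerivAt (fun x : ℝ => c * x) c u := by
        simpa using (hasDerivAt_id u).const_mul c
      exact (hVderiv u (le_trans ha hu.1)).add h1
    have hanti : AntitoneOn W (Set.Icc a b) := by
      apply antitoneOn_of_deriv_nonpos (convex_Icc a b)
      · exact fun u hu => (hWd u hu).continuousAt.continuousWithinAt
      · intro u hu
        rw [interior_Icc] at hu
        exact ((hWd u (Set.mem_Icc_of_Ioo hu)).differentiableAt).differentiableWithinAt
      · intro u hu
        rw [interior_Icc] at hu
        rw [(hWd u (Set.mem_Icc_of_Ioo hu)).deriv]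
        have := hc u (Set.mem_Icc_of_Ioo hu)
        linarith
    exact hanti ⟨le_refl a, hab⟩ ⟨hab, le_refl b⟩ hab
  -- V bounded below on [0,∞)
  set msum : ℝ := ∑ i : Fin 3, ∑ j : Fin 3, |M i j| with hmsum
  set B : ℝ := (M * (1 : M3)).trace - msum with hB
  have hVlb : ∀ t, 0 ≤ t → B ≤ V t := by
    intro t ht
    have e : (M * Rtil t).trace = ∑ i : Fin 3, ∑ j : Fin 3, M i j * Rtil t j i := by
      simp only [Matrix.trace, Matrix.diag, Matrix.mul_apply]
    have htr : (M * Rtil t).trace ≤ msum := by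
      rw [e, hmsum]
      refine Finset.sum_le_sum fun i _ => Finset.sum_le_sum fun j _ => ?_
      have h1 := SO3.abs_entry_le (Rtil t) (hSO3 t ht).1 j i
      calc M i j * Rtil t j i ≤ |M i j * Rtil t j i| := le_abs_self _
        _ = |M i j| * |Rtil t j i| := abs_mul _ _
        _ ≤ |M i j| * 1 := mul_le_mul_of_nonneg_left h1 (abs_nonneg _)
        _ = |M i j| := mul_one _
    have hVe : V t = (M * (1 : M3)).trace - (M * Rtil t).trace := by
      simp only [hVdef]
      rw [Matrix.mul_sub, Matrix.trace_sub]
    rw [hVe, hB]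
    linarith
  have hVmono : ∀ s t, 0 ≤ s → s ≤ t → V t ≤ V s := by
    intro s t hs hst
    have := decay s t hs hst 0 (fun u _ => by
      have := hgnn u
      positivity)
    simpa using this
  -- Cauchy-type property of V
  have hVcauchy : ∀ ε : ℝ, 0 < ε → ∃ T, 0 ≤ T ∧ ∀ s t, T ≤ s → s ≤ t → V s - V t < ε := by
    intro ε hε
    have hne : (V '' Set.Ici 0).Nonempty := ⟨V 0, ⟨0, Set.self_mem_Ici, rfl⟩⟩
    have hbdd : BddBelow (V '' Set.Ici 0) := by
      refine ⟨B, fun y hy => ?_⟩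
      obtain ⟨u, hu, rfl⟩ := hy
      exact hVlb u hu
    obtain ⟨y, hy, hyI⟩ := Real.lt_sInf_add_pos hne hε
    obtain ⟨T, hT, rfl⟩ := hy
    refine ⟨T, hT, fun s t hs hst => ?_⟩
    have h1 : V s ≤ V T := hVmono T s hT hs
    have h2 : sInf (V '' Set.Ici 0) ≤ V t :=
      csInf_le hbdd ⟨t, le_trans (le_trans hT hs) hst, rfl⟩
    linarith
  -- Barbalat: g tends to 0
  have hgto : Tendsto g atTop (nhds 0) := by
    rw [Metric.tendsto_atTop]
    intro ε hε
    set δ : ℝ := ε / (2 * C) with hδ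
    have hδpos : 0 < δ := by positivity
    set drop : ℝ := 2 * kR * ε * δ with hdrop
    have hdroppos : 0 < drop := by positivity
    obtain ⟨T, hT0, hTc⟩ := hVcauchy drop hdroppos
    refine ⟨T, fun t ht => ?_⟩
    have ht0 : 0 ≤ t := le_trans hT0 ht
    rw [Real.dist_eq, sub_zero, abs_of_nonneg (hgnn t)]
    by_contra hge
    push_neg at hge
    have hglow : ∀ u ∈ Set.Icc t (t + δ), ε / 2 ≤ g u := by
      intro u hu
      have h1 := hlip t u ht0 (le_trans ht0 hu.1)
      have h2 : |u - t| ≤ δ := by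
        rw [abs_of_nonneg (by linarith [hu.1])]
        linarith [hu.2]
      have h3 : |g u - g t| ≤ C * δ :=
        le_trans h1 (mul_le_mul_of_nonneg_left h2 hCpos.le)
      have hCd : C * δ = ε / 2 := by
        rw [hδ]
        field_simp
      rw [hCd] at h3
      have h4 := abs_le.mp h3
      linarith [h4.1]
    have hd := decay t (t + δ) ht0 (by linarith) (2 * kR * ε) (fun u hu => by
      have := hglow u hu
      nlinarith)
    have hVd : drop ≤ V t - V (t + δ) := by
      rw [hdrop]
      nlinarith [hd]
    have := hTc t (t + δ) ht (by linarith)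
    linarith
  -- final assembly
  have hUne : (Upsilon M).Nonempty := ⟨1, Or.inl rfl⟩
  have himne : ∀ t, ((fun A => frob (Rtil t - A)) '' Upsilon M).Nonempty :=
    fun t => hUne.image _
  have hbddb : ∀ t, BddBelow ((fun A => frob (Rtil t - A)) '' Upsilon M) := by
    intro t
    refine ⟨0, fun y hy => ?_⟩
    obtain ⟨A, _, rfl⟩ := hy
    exact frob_nonneg _
  set h : ℝ → ℝ := fun t => sInf ((fun A => frob (Rtil t - A)) '' Upsilon M) with hh
  have hhnn : ∀ t, 0 ≤ h t := fun t =>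
    le_csInf (himne t) (fun y hy => by obtain ⟨A, _, rfl⟩ := hy; exact frob_nonneg _)
  have hhle : ∀ t A, A ∈ Upsilon M → h t ≤ frob (Rtil t - A) :=
    fun t A hA => csInf_le (hbddb t) ⟨A, hA, rfl⟩
  rw [Metric.tendsto_atTop]
  intro ε hε
  by_contra hcon
  push_neg at hcon
  have hfreq : ∀ n : ℕ, ∃ t, (n : ℝ) ≤ t ∧ ε ≤ h t := by
    intro n
    obtain ⟨t, ht, hd⟩ := hcon n
    refine ⟨t, ht, ?_⟩
    rwa [Real.dist_eq, sub_zero, abs_of_nonneg (hhnn t)] at hd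
  choose u hu1 hu2 using hfreq
  have hu0 : ∀ n, 0 ≤ u n := fun n => le_trans (Nat.cast_nonneg n) (hu1 n)
  have hutop : Tendsto u atTop atTop :=
    tendsto_atTop_mono hu1 tendsto_natCast_atTop_atTop
  have hmem : ∀ n, Rtil (u n) ∈ {R : M3 | SO3 R} := fun n => hSO3 _ (hu0 n)
  obtain ⟨Rs, hRs, φ, hφ, hconv⟩ := so3_compact.tendsto_subseq hmem
  have hFlim : Tendsto (fun n => F (Rtil (u (φ n)))) atTop (nhds (F Rs)) :=
    ((cont_F M).tendsto Rs).comp hconv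
  have huφtop : Tendsto (fun n => u (φ n)) atTop atTop :=
    hutop.comp hφ.tendsto_atTop
  have hglim : Tendsto (fun n => g (u (φ n))) atTop (nhds 0) := hgto.comp huφtop
  have hF0 : F Rs = 0 := tendsto_nhds_unique hFlim hglim
  have hpsi0 : psi (M * Rs) = 0 := by
    have e : psi (M * Rs) 0 * psi (M * Rs) 0 + psi (M * Rs) 1 * psi (M * Rs) 1
        + psi (M * Rs) 2 * psi (M * Rs) 2 = 0 := by
      have := hF0
      simpa [hF, dotProduct, Fin.sum_univ_three] using this
    funext i
    have h0 : psi (M * Rs) 0 = 0 := mul_self_eq_zero.mp (by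
      nlinarith [mul_self_nonneg (psi (M * Rs) 1), mul_self_nonneg (psi (M * Rs) 2)])
    have h1 : psi (M * Rs) 1 = 0 := mul_self_eq_zero.mp (by
      nlinarith [mul_self_nonneg (psi (M * Rs) 0), mul_self_nonneg (psi (M * Rs) 2)])
    have h2 : psi (M * Rs) 2 = 0 := mul_self_eq_zero.mp (by
      nlinarith [mul_self_nonneg (psi (M * Rs) 0), mul_self_nonneg (psi (M * Rs) 1)])
    fin_cases i
    · exact h0
    · exact h1
    · exact h2
  have hUps : Rs ∈ Upsilon M := crit_mem_Upsilon M hsym hpsd hdist Rs hRs hpsi0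
  have hdistlim : Tendsto (fun n => frob (Rtil (u (φ n)) - Rs)) atTop (nhds 0) := by
    have h1 := ((cont_frob_sub Rs).tendsto Rs).comp hconv
    have h2 : frob (Rs - Rs) = 0 := by
      simp [frob]
    rwa [h2] at h1
  have hev : ∀ᶠ n in atTop, frob (Rtil (u (φ n)) - Rs) < ε :=
    hdistlim.eventually (gt_mem_nhds hε)
  obtain ⟨n, hn⟩ := hev.exists
  have := hhle (u (φ n)) Rs hUps
  have := hu2 (φ n)
  linarith
end
end

section
/- Let M ∈ ℝ^{3×3} be symmetric positive semi-definite with three distinct eigenvalues and k_R > 0. Then the equilibrium R̃ = I₃ of the system R̃' = −2 k_R R̃ [ψ(M R̃)]^× on SO(3) is locally exponentially stable: there exist ε > 0, c > 0 and λ > 0 such that every differentiable solution R̃ : [0, ∞) → SO(3) of this system with |R̃(0)|_I ≤ ε satisfies |R̃(t)|_I ≤ c e^{−λ t} |R̃(0)|_I for all t ≥ 0. -/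
open Matrix Real Filter

noncomputable section

lemma trace_skew (A : M3) (x : V3) : (A * skew x).trace = -2 * (x ⬝ᵥ psi A) := by
  simp [skew, Matrix.trace_fin_three, Matrix.mul_apply, Fin.sum_univ_three, psi, dotProduct]
  ring

lemma identA (M R : M3) (hsym : Mᵀ = M) (hR : Rᵀ * R = 1) :
    psi (M * R) ⬝ᵥ psi R = (1/2) * (psi R ⬝ᵥ ((M.trace • (1 : M3) - M) *ᵥ psi R)) := by
  have hR' : R * Rᵀ = 1 := mul_eq_one_comm.mp hR
  have hm : ∀ i j : Fin 3, M j i = M i j := fun i j =>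
    (Matrix.transpose_apply M i j).symm.trans (congrFun (congrFun hsym i) j)
  have e : ∀ i j : Fin 3, R i 0 * R j 0 + R i 1 * R j 1 + R i 2 * R j 2
      = if i = j then 1 else 0 := by
    intro i j
    simpa [Matrix.mul_apply, Fin.sum_univ_three, Matrix.one_apply] using
      congrFun (congrFun hR' i) j
  have f : ∀ i j : Fin 3, R 0 i * R 0 j + R 1 i * R 1 j + R 2 i * R 2 j
      = if i = j then 1 else 0 := by
    intro i j
    simpa [Matrix.mul_apply, Fin.sum_univ_three, Matrix.one_apply] using
      congrFun (congrFun hR i) j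
  have e00 := e 0 0; have e01 := e 0 1; have e02 := e 0 2
  have e10 := e 1 0; have e11 := e 1 1; have e12 := e 1 2
  have e20 := e 2 0; have e21 := e 2 1; have e22 := e 2 2
  have f00 := f 0 0; have f01 := f 0 1; have f02 := f 0 2
  have f10 := f 1 0; have f11 := f 1 1; have f12 := f 1 2
  have f20 := f 2 0; have f21 := f 2 1; have f22 := f 2 2
  simp only [psi, dotProduct, mulVec, Matrix.mul_apply, Fin.sum_univ_three,
    Matrix.sub_apply, Matrix.smul_apply, Matrix.one_apply, Matrix.trace_fin_three,
    Matrix.cons_val_zero, Matrix.cons_val_one, Matrix.head_cons, Matrix.cons_val_two,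
    Matrix.tail_cons, smul_eq_mul] at *
  simp only [show ((0:Fin 3) = 0) = True from by simp, show ((1:Fin 3) = 1) = True from by simp,
    show ((2:Fin 3) = 2) = True from by simp,
    show ((0:Fin 3) = 1) = False from by decide, show ((1:Fin 3) = 0) = False from by decide,
    show ((0:Fin 3) = 2) = False from by decide, show ((2:Fin 3) = 0) = False from by decide,
    show ((1:Fin 3) = 2) = False from by decide, show ((2:Fin 3) = 1) = False from by decide,
    if_true, if_false] at *
  rw [hm 0 1, hm 0 2, hm 1 2]
  linear_combination (1/8) * (M 0 0 * (e00 - f00) + M 0 1 * (e10 - f10) + M 0 2 * (e20 - f20) + M 0 1 * (e01 - f01) + M 1 1 * (e11 - f11) + M 1 2 * (e21 - f21) + M 0 2 * (e02 - f02) + M 1 2 * (e12 - f12) + M 2 2 * (e22 - f22))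

lemma identB (R : M3) (hR : Rᵀ * R = 1) (hdetR : R.det = 1) :
    psi R ⬝ᵥ psi R = (1 - R).trace * (1 - (1 - R).trace / 4) := by
  have hR' : R * Rᵀ = 1 := mul_eq_one_comm.mp hR
  have e : ∀ i j : Fin 3, R i 0 * R j 0 + R i 1 * R j 1 + R i 2 * R j 2
      = if i = j then 1 else 0 := by
    intro i j
    simpa [Matrix.mul_apply, Fin.sum_univ_three, Matrix.one_apply] using
      congrFun (congrFun hR' i) j
  have e00 := e 0 0; have e01 := e 0 1; have e02 := e 0 2
  have e10 := e 1 0; have e11 := e 1 1; have e12 := e 1 2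
  have e20 := e 2 0; have e21 := e 2 1; have e22 := e 2 2
  have hd := hdetR
  rw [Matrix.det_fin_three] at hd
  simp only [psi, dotProduct, Fin.sum_univ_three, Matrix.trace_fin_three,
    Matrix.sub_apply, Matrix.one_apply, Matrix.cons_val_zero, Matrix.cons_val_one,
    Matrix.head_cons, Matrix.cons_val_two, Matrix.tail_cons] at *
  simp only [show ((0:Fin 3) = 0) = True from by simp, show ((1:Fin 3) = 1) = True from by simp,
    show ((2:Fin 3) = 2) = True from by simp,
    show ((0:Fin 3) = 1) = False from by decide, show ((1:Fin 3) = 0) = False from by decide,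
    show ((0:Fin 3) = 2) = False from by decide, show ((2:Fin 3) = 0) = False from by decide,
    show ((1:Fin 3) = 2) = False from by decide, show ((2:Fin 3) = 1) = False from by decide,
    if_true, if_false] at *
  linear_combination (1/4)*(e00 + e11 + e22) + (1/2)*(R 0 0 + R 1 1 + R 2 2)*hd + (-(1/2))*(R 1 1 * R 2 2 - R 1 2 * R 2 1)*e00 + (-(1/2))*(R 0 2 * R 2 1 - R 0 1 * R 2 2)*e10 + (-(1/2))*(R 0 1 * R 1 2 - R 0 2 * R 1 1)*e20 + (-(1/2))*(R 1 2 * R 2 0 - R 1 0 * R 2 2)*e01 + (-(1/2))*(R 0 0 * R 2 2 - R 0 2 * R 2 0)*e11 + (-(1/2))*(R 0 2 * R 1 0 - R 0 0 * R 1 2)*e21 + (-(1/2))*(R 1 0 * R 2 1 - R 1 1 * R 2 0)*e02 + (-(1/2))*(R 0 1 * R 2 0 - R 0 0 * R 2 1)*e12 + (-(1/2))*(R 0 0 * R 1 1 - R 0 1 * R 1 0)*e22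

lemma row_lag (a0 a1 a2 y0 y1 y2 : ℝ) (hy : y0^2+y1^2+y2^2 = 1) :
    (a0^2+a1^2+a2^2) - (a0*y0+a1*y1+a2*y2)^2
      = (a0*y1-a1*y0)^2+(a0*y2-a2*y0)^2+(a1*y2-a2*y1)^2 := by
  linear_combination (-(a0^2+a1^2+a2^2)) * hy

open scoped MatrixOrder in
lemma quadpos_unit (M : M3) (hpsd : M.PosSemidef)
    (hdist : Function.Injective hpsd.1.eigenvalues) (y : V3) (hy : y ⬝ᵥ y = 1) :
    0 < y ⬝ᵥ ((M.trace • (1 : M3) - M) *ᵥ y) := by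
  obtain ⟨B, hBsym, hB2⟩ : ∃ B : M3, Bᵀ = B ∧ B * B = M := by
    refine ⟨CFC.sqrt M, ?_, CFC.sqrt_mul_sqrt_self M hpsd.nonneg⟩
    have h := (CFC.sqrt_nonneg M).posSemidef.1
    rwa [Matrix.IsHermitian, Matrix.conjTranspose_eq_transpose_of_trivial] at h
  have hsplit : y ⬝ᵥ ((M.trace • (1 : M3) - M) *ᵥ y)
      = M.trace - (B *ᵥ y) ⬝ᵥ (B *ᵥ y) := by
    have h1 : y ⬝ᵥ (M *ᵥ y) = (B *ᵥ y) ⬝ᵥ (B *ᵥ y) := by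
      rw [← hB2, ← Matrix.mulVec_mulVec, Matrix.dotProduct_mulVec y B,
        ← Matrix.vecMul_transpose, hBsym]
    rw [Matrix.sub_mulVec, dotProduct_sub, h1, Matrix.smul_mulVec,
      Matrix.one_mulVec, dotProduct_smul, hy]
    simp
  have htr : M.trace = (Bᵀ * B).trace := by rw [hBsym, hB2]
  have hy' : y 0 ^2 + y 1 ^2 + y 2 ^2 = 1 := by
    simpa [dotProduct, Fin.sum_univ_three, sq] using hy
  have key : y ⬝ᵥ ((M.trace • (1 : M3) - M) *ᵥ y) = (B 0 0 * y 1 - B 0 1 * y 0)^2 + (B 0 0 * y 2 - B 0 2 * y 0)^2 + (B 0 1 * y 2 - B 0 2 * y 1)^2 + (B 1 0 * y 1 - B 1 1 * y 0)^2 + (B 1 0 * y 2 - B 1 2 * y 0)^2 + (B 1 1 * y 2 - B 1 2 * y 1)^2 + (B 2 0 * y 1 - B 2 1 * y 0)^2 + (B 2 0 * y 2 - B 2 2 * y 0)^2 + (B 2 1 * y 2 - B 2 2 * y 1)^2 := by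
    rw [hsplit, htr]
    simp only [Matrix.trace_fin_three, Matrix.mul_apply, Matrix.transpose_apply,
      Fin.sum_univ_three, dotProduct, Matrix.mulVec, Matrix.smul_apply, smul_eq_mul]
    have l0 := row_lag (B 0 0) (B 0 1) (B 0 2) (y 0) (y 1) (y 2) hy'
    have l1 := row_lag (B 1 0) (B 1 1) (B 1 2) (y 0) (y 1) (y 2) hy'
    have l2 := row_lag (B 2 0) (B 2 1) (B 2 2) (y 0) (y 1) (y 2) hy'
    linear_combination l0 + l1 + l2
  rw [key]
  rcases lt_or_ge 0 ((B 0 0 * y 1 - B 0 1 * y 0)^2 + (B 0 0 * y 2 - B 0 2 * y 0)^2 + (B 0 1 * y 2 - B 0 2 * y 1)^2 + (B 1 0 * y 1 - B 1 1 * y 0)^2 + (B 1 0 * y 2 - B 1 2 * y 0)^2 + (B 1 1 * y 2 - B 1 2 * y 1)^2 + (B 2 0 * y 1 - B 2 1 * y 0)^2 + (B 2 0 * y 2 - B 2 2 * y 0)^2 + (B 2 1 * y 2 - B 2 2 * y 1)^2) with h | h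
  · exact h
  exfalso
  have z0 : (B 0 0 * y 1 - B 0 1 * y 0) = 0 := by
    have hq : (B 0 0 * y 1 - B 0 1 * y 0)^2 = 0 := le_antisymm (by linarith [sq_nonneg (B 0 0 * y 1 - B 0 1 * y 0), sq_nonneg (B 0 0 * y 2 - B 0 2 * y 0), sq_nonneg (B 0 1 * y 2 - B 0 2 * y 1), sq_nonneg (B 1 0 * y 1 - B 1 1 * y 0), sq_nonneg (B 1 0 * y 2 - B 1 2 * y 0), sq_nonneg (B 1 1 * y 2 - B 1 2 * y 1), sq_nonneg (B 2 0 * y 1 - B 2 1 * y 0), sq_nonneg (B 2 0 * y 2 - B 2 2 * y 0), sq_nonneg (B 2 1 * y 2 - B 2 2 * y 1)]) (sq_nonneg _)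
    exact sq_eq_zero_iff.mp hq
  have z1 : (B 0 0 * y 2 - B 0 2 * y 0) = 0 := by
    have hq : (B 0 0 * y 2 - B 0 2 * y 0)^2 = 0 := le_antisymm (by linarith [sq_nonneg (B 0 0 * y 1 - B 0 1 * y 0), sq_nonneg (B 0 0 * y 2 - B 0 2 * y 0), sq_nonneg (B 0 1 * y 2 - B 0 2 * y 1), sq_nonneg (B 1 0 * y 1 - B 1 1 * y 0), sq_nonneg (B 1 0 * y 2 - B 1 2 * y 0), sq_nonneg (B 1 1 * y 2 - B 1 2 * y 1), sq_nonneg (B 2 0 * y 1 - B 2 1 * y 0), sq_nonneg (B 2 0 * y 2 - B 2 2 * y 0), sq_nonneg (B 2 1 * y 2 - B 2 2 * y 1)]) (sq_nonneg _)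
    exact sq_eq_zero_iff.mp hq
  have z2 : (B 0 1 * y 2 - B 0 2 * y 1) = 0 := by
    have hq : (B 0 1 * y 2 - B 0 2 * y 1)^2 = 0 := le_antisymm (by linarith [sq_nonneg (B 0 0 * y 1 - B 0 1 * y 0), sq_nonneg (B 0 0 * y 2 - B 0 2 * y 0), sq_nonneg (B 0 1 * y 2 - B 0 2 * y 1), sq_nonneg (B 1 0 * y 1 - B 1 1 * y 0), sq_nonneg (B 1 0 * y 2 - B 1 2 * y 0), sq_nonneg (B 1 1 * y 2 - B 1 2 * y 1), sq_nonneg (B 2 0 * y 1 - B 2 1 * y 0), sq_nonneg (B 2 0 * y 2 - B 2 2 * y 0), sq_nonneg (B 2 1 * y 2 - B 2 2 * y 1)]) (sq_nonneg _)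
    exact sq_eq_zero_iff.mp hq
  have z3 : (B 1 0 * y 1 - B 1 1 * y 0) = 0 := by
    have hq : (B 1 0 * y 1 - B 1 1 * y 0)^2 = 0 := le_antisymm (by linarith [sq_nonneg (B 0 0 * y 1 - B 0 1 * y 0), sq_nonneg (B 0 0 * y 2 - B 0 2 * y 0), sq_nonneg (B 0 1 * y 2 - B 0 2 * y 1), sq_nonneg (B 1 0 * y 1 - B 1 1 * y 0), sq_nonneg (B 1 0 * y 2 - B 1 2 * y 0), sq_nonneg (B 1 1 * y 2 - B 1 2 * y 1), sq_nonneg (B 2 0 * y 1 - B 2 1 * y 0), sq_nonneg (B 2 0 * y 2 - B 2 2 * y 0), sq_nonneg (B 2 1 * y 2 - B 2 2 * y 1)]) (sq_nonneg _)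
    exact sq_eq_zero_iff.mp hq
  have z4 : (B 1 0 * y 2 - B 1 2 * y 0) = 0 := by
    have hq : (B 1 0 * y 2 - B 1 2 * y 0)^2 = 0 := le_antisymm (by linarith [sq_nonneg (B 0 0 * y 1 - B 0 1 * y 0), sq_nonneg (B 0 0 * y 2 - B 0 2 * y 0), sq_nonneg (B 0 1 * y 2 - B 0 2 * y 1), sq_nonneg (B 1 0 * y 1 - B 1 1 * y 0), sq_nonneg (B 1 0 * y 2 - B 1 2 * y 0), sq_nonneg (B 1 1 * y 2 - B 1 2 * y 1), sq_nonneg (B 2 0 * y 1 - B 2 1 * y 0), sq_nonneg (B 2 0 * y 2 - B 2 2 * y 0), sq_nonneg (B 2 1 * y 2 - B 2 2 * y 1)]) (sq_nonneg _)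
    exact sq_eq_zero_iff.mp hq
  have z5 : (B 1 1 * y 2 - B 1 2 * y 1) = 0 := by
    have hq : (B 1 1 * y 2 - B 1 2 * y 1)^2 = 0 := le_antisymm (by linarith [sq_nonneg (B 0 0 * y 1 - B 0 1 * y 0), sq_nonneg (B 0 0 * y 2 - B 0 2 * y 0), sq_nonneg (B 0 1 * y 2 - B 0 2 * y 1), sq_nonneg (B 1 0 * y 1 - B 1 1 * y 0), sq_nonneg (B 1 0 * y 2 - B 1 2 * y 0), sq_nonneg (B 1 1 * y 2 - B 1 2 * y 1), sq_nonneg (B 2 0 * y 1 - B 2 1 * y 0), sq_nonneg (B 2 0 * y 2 - B 2 2 * y 0), sq_nonneg (B 2 1 * y 2 - B 2 2 * y 1)]) (sq_nonneg _)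
    exact sq_eq_zero_iff.mp hq
  have z6 : (B 2 0 * y 1 - B 2 1 * y 0) = 0 := by
    have hq : (B 2 0 * y 1 - B 2 1 * y 0)^2 = 0 := le_antisymm (by linarith [sq_nonneg (B 0 0 * y 1 - B 0 1 * y 0), sq_nonneg (B 0 0 * y 2 - B 0 2 * y 0), sq_nonneg (B 0 1 * y 2 - B 0 2 * y 1), sq_nonneg (B 1 0 * y 1 - B 1 1 * y 0), sq_nonneg (B 1 0 * y 2 - B 1 2 * y 0), sq_nonneg (B 1 1 * y 2 - B 1 2 * y 1), sq_nonneg (B 2 0 * y 1 - B 2 1 * y 0), sq_nonneg (B 2 0 * y 2 - B 2 2 * y 0), sq_nonneg (B 2 1 * y 2 - B 2 2 * y 1)]) (sq_nonneg _)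
    exact sq_eq_zero_iff.mp hq
  have z7 : (B 2 0 * y 2 - B 2 2 * y 0) = 0 := by
    have hq : (B 2 0 * y 2 - B 2 2 * y 0)^2 = 0 := le_antisymm (by linarith [sq_nonneg (B 0 0 * y 1 - B 0 1 * y 0), sq_nonneg (B 0 0 * y 2 - B 0 2 * y 0), sq_nonneg (B 0 1 * y 2 - B 0 2 * y 1), sq_nonneg (B 1 0 * y 1 - B 1 1 * y 0), sq_nonneg (B 1 0 * y 2 - B 1 2 * y 0), sq_nonneg (B 1 1 * y 2 - B 1 2 * y 1), sq_nonneg (B 2 0 * y 1 - B 2 1 * y 0), sq_nonneg (B 2 0 * y 2 - B 2 2 * y 0), sq_nonneg (B 2 1 * y 2 - B 2 2 * y 1)]) (sq_nonneg _)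
    exact sq_eq_zero_iff.mp hq
  have z8 : (B 2 1 * y 2 - B 2 2 * y 1) = 0 := by
    have hq : (B 2 1 * y 2 - B 2 2 * y 1)^2 = 0 := le_antisymm (by linarith [sq_nonneg (B 0 0 * y 1 - B 0 1 * y 0), sq_nonneg (B 0 0 * y 2 - B 0 2 * y 0), sq_nonneg (B 0 1 * y 2 - B 0 2 * y 1), sq_nonneg (B 1 0 * y 1 - B 1 1 * y 0), sq_nonneg (B 1 0 * y 2 - B 1 2 * y 0), sq_nonneg (B 1 1 * y 2 - B 1 2 * y 1), sq_nonneg (B 2 0 * y 1 - B 2 1 * y 0), sq_nonneg (B 2 0 * y 2 - B 2 2 * y 0), sq_nonneg (B 2 1 * y 2 - B 2 2 * y 1)]) (sq_nonneg _)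
    exact sq_eq_zero_iff.mp hq
  have hBvec : B = Matrix.vecMulVec (fun k => B k 0 * y 0 + B k 1 * y 1 + B k 2 * y 2) y := by
    ext k j
    rw [Matrix.vecMulVec_apply]
    fin_cases k <;> fin_cases j <;>
      simp only [Fin.zero_eta, Fin.mk_one, Fin.reduceFinMk] <;>
      first
      | linear_combination (-(B 0 0)) * hy' + y 1 * z0 + y 2 * z1
      | linear_combination (-(B 0 1)) * hy' + (- y 0) * z0 + y 2 * z2
      | linear_combination (-(B 0 2)) * hy' + (- y 0) * z1 + (- y 1) * z2
      | linear_combination (-(B 1 0)) * hy' + y 1 * z3 + y 2 * z4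
      | linear_combination (-(B 1 1)) * hy' + (- y 0) * z3 + y 2 * z5
      | linear_combination (-(B 1 2)) * hy' + (- y 0) * z4 + (- y 1) * z5
      | linear_combination (-(B 2 0)) * hy' + y 1 * z6 + y 2 * z7
      | linear_combination (-(B 2 1)) * hy' + (- y 0) * z6 + y 2 * z8
      | linear_combination (-(B 2 2)) * hy' + (- y 0) * z7 + (- y 1) * z8
  have hrank : M.rank ≤ 1 := by
    have hM' : M = Bᵀ * B := by rw [hBsym]; exact hB2.symm
    rw [hM', Matrix.rank_transpose_mul_self, hBvec, Matrix.vecMulVec_eq (Fin 1)]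
    exact le_trans (Matrix.rank_mul_le_right _ _)
      (by simpa using Matrix.rank_le_card_height (Matrix.replicateRow (Fin 1) y))
  have hcard : Fintype.card {i // hpsd.1.eigenvalues i ≠ 0} ≤ 1 := by
    rw [← hpsd.1.rank_eq_card_non_zero_eigs]; exact hrank
  have hcompl := Fintype.card_subtype_compl (fun i : Fin 3 => hpsd.1.eigenvalues i = 0)
  rw [Fintype.card_fin] at hcompl
  have hcard2 : 1 < Fintype.card {i // hpsd.1.eigenvalues i = 0} := by
    have h1 : Fintype.card {i // ¬ hpsd.1.eigenvalues i = 0} ≤ 1 := hcard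
    have h2 : Fintype.card {i // hpsd.1.eigenvalues i = 0} ≤ 3 :=
      Fintype.card_subtype_le _
    omega
  obtain ⟨a, b, hab⟩ := Fintype.one_lt_card_iff.mp hcard2
  exact hab (Subtype.ext (hdist (a.2.trans b.2.symm)))

lemma quadpos (M : M3) (hpsd : M.PosSemidef)
    (hdist : Function.Injective hpsd.1.eigenvalues) :
    ∃ μ > (0:ℝ), ∀ y : V3, μ * (y ⬝ᵥ y) ≤ y ⬝ᵥ ((M.trace • (1 : M3) - M) *ᵥ y) := by
  have hcont : Continuous (fun y : V3 => y ⬝ᵥ ((M.trace • (1 : M3) - M) *ᵥ y)) := by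
    simp only [dotProduct, Matrix.mulVec, Fin.sum_univ_three]
    fun_prop
  have hcont2 : Continuous (fun y : V3 => y ⬝ᵥ y) := by
    simp only [dotProduct, Fin.sum_univ_three]; fun_prop
  set S : Set V3 := {y | y ⬝ᵥ y = 1} with hS
  have hclosed : IsClosed S := isClosed_eq hcont2 continuous_const
  have hsub : S ⊆ Metric.closedBall 0 1 := by
    intro y hy
    have hy0 : y ⬝ᵥ y = 1 := hy
    have hy' : y 0 * y 0 + y 1 * y 1 + y 2 * y 2 = 1 := by
      simpa [dotProduct, Fin.sum_univ_three] using hy0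
    rw [Metric.mem_closedBall, dist_zero_right]
    refine (pi_norm_le_iff_of_nonneg (by norm_num)).mpr fun i => ?_
    rw [Real.norm_eq_abs, abs_le]
    fin_cases i <;> simp only [Fin.zero_eta, Fin.mk_one, Fin.reduceFinMk] <;>
      constructor <;> nlinarith
  have hcompact : IsCompact S :=
    (isCompact_closedBall (0:V3) 1).of_isClosed_subset hclosed hsub
  have hne : S.Nonempty := by
    refine ⟨![1,0,0], ?_⟩
    simp [hS, dotProduct, Fin.sum_univ_three]
  obtain ⟨u, huS, hmin⟩ := hcompact.exists_isMinOn hne hcont.continuousOn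
  refine ⟨u ⬝ᵥ ((M.trace • (1 : M3) - M) *ᵥ u), quadpos_unit M hpsd hdist u huS, ?_⟩
  intro y
  have hynn : 0 ≤ y ⬝ᵥ y := by
    simp only [dotProduct, Fin.sum_univ_three]
    nlinarith [sq_nonneg (y 0), sq_nonneg (y 1), sq_nonneg (y 2)]
  rcases eq_or_lt_of_le hynn with hy0 | hy0
  · have hyz : y = 0 := by
      have h := hy0.symm
      simp only [dotProduct, Fin.sum_univ_three] at h
      funext i
      fin_cases i <;> simp only [Fin.zero_eta, Fin.mk_one, Fin.reduceFinMk, Pi.zero_apply] <;>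
        nlinarith [sq_nonneg (y 0), sq_nonneg (y 1), sq_nonneg (y 2)]
    subst hyz
    simp
  · set s := y ⬝ᵥ y with hsdef
    set c := (Real.sqrt s)⁻¹ with hc
    have hsq : Real.sqrt s * Real.sqrt s = s := Real.mul_self_sqrt hynn
    have hsqpos : 0 < Real.sqrt s := Real.sqrt_pos.mpr hy0
    have hsne : Real.sqrt s ≠ 0 := ne_of_gt hsqpos
    have hmem : (c • y) ∈ S := by
      show (c • y) ⬝ᵥ (c • y) = 1
      rw [smul_dotProduct, dotProduct_smul, smul_eq_mul, smul_eq_mul, ← hsdef, hc]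
      field_simp
      rw [Real.sq_sqrt hynn]
    have h1 : u ⬝ᵥ ((M.trace • (1 : M3) - M) *ᵥ u)
        ≤ (c • y) ⬝ᵥ ((M.trace • (1 : M3) - M) *ᵥ (c • y)) := isMinOn_iff.mp hmin _ hmem
    have hQ : (c • y) ⬝ᵥ ((M.trace • (1 : M3) - M) *ᵥ (c • y))
        = c^2 * (y ⬝ᵥ ((M.trace • (1 : M3) - M) *ᵥ y)) := by
      rw [Matrix.mulVec_smul, smul_dotProduct, dotProduct_smul,
        smul_eq_mul, smul_eq_mul]
      ring
    rw [hQ] at h1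
    have hc2 : c^2 * s = 1 := by
      rw [hc]
      field_simp
      rw [Real.sq_sqrt hynn]
    have hc2pos : 0 < c^2 := by positivity
    calc (u ⬝ᵥ ((M.trace • (1 : M3) - M) *ᵥ u)) * s
        ≤ (c^2 * (y ⬝ᵥ ((M.trace • (1 : M3) - M) *ᵥ y))) * s := by nlinarith
      _ = (c^2 * s) * (y ⬝ᵥ ((M.trace • (1 : M3) - M) *ᵥ y)) := by ring
      _ = y ⬝ᵥ ((M.trace • (1 : M3) - M) *ᵥ y) := by rw [hc2]; ring

lemma decay (F : ℝ → ℝ) (lam : ℝ)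
    (hder : ∀ t, 0 ≤ t → ∃ d, HasDerivAt F d t ∧ d ≤ -lam * F t) :
    ∀ t, 0 ≤ t → F t ≤ F 0 * Real.exp (-lam * t) := by
  have key : AntitoneOn (fun t => F t * Real.exp (lam * t)) (Set.Ici 0) := by
    have hG : ∀ t, 0 ≤ t → ∃ d, HasDerivAt (fun t => F t * Real.exp (lam * t))
        ((d + lam * F t) * Real.exp (lam * t)) t ∧ d ≤ -lam * F t := by
      intro t ht
      obtain ⟨d, hd, hdle⟩ := hder t ht
      refine ⟨d, ?_, hdle⟩
      have he : HasDerivAt (fun t => Real.exp (lam * t)) (lam * Real.exp (lam * t)) t := by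
        have := ((hasDerivAt_id t).const_mul lam).exp
        simpa [mul_comm] using this
      have : HasDerivAt (fun t => F t * Real.exp (lam * t)) _ t := hd.mul he
      convert this using 1
      ring
    apply antitoneOn_of_deriv_nonpos (convex_Ici 0)
    · intro t ht
      obtain ⟨d, hd, _⟩ := hG t ht
      exact hd.continuousAt.continuousWithinAt
    · intro t ht
      rw [interior_Ici] at ht
      obtain ⟨d, hd, _⟩ := hG t (le_of_lt ht)
      exact hd.differentiableAt.differentiableWithinAt
    · intro t ht
      rw [interior_Ici] at ht
      obtain ⟨d, hd, hdle⟩ := hG t (le_of_lt ht)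
      rw [hd.deriv]
      have : d + lam * F t ≤ 0 := by linarith
      have hexp : 0 < Real.exp (lam * t) := Real.exp_pos _
      nlinarith
  intro t ht
  have h := key (Set.self_mem_Ici) (Set.mem_Ici.mpr ht) ht
  simp only [mul_zero, Real.exp_zero, mul_one] at h
  have hexp : 0 < Real.exp (lam * t) := Real.exp_pos _
  have : F t * Real.exp (lam * t) ≤ F 0 := h
  calc F t = (F t * Real.exp (lam * t)) * Real.exp (-lam * t) := by
        rw [mul_assoc, ← Real.exp_add]; simp
    _ ≤ F 0 * Real.exp (-lam * t) := by
        have := Real.exp_pos (-lam * t); nlinarith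

lemma trace_one_sub (R : M3) : (1 - R).trace = 3 - (R 0 0 + R 1 1 + R 2 2) := by
  simp [Matrix.trace_fin_three, Matrix.sub_apply, Matrix.one_apply]
  try ring

lemma Fnonneg (R : M3) (hR : Rᵀ * R = 1) : 0 ≤ 3 - (R 0 0 + R 1 1 + R 2 2) := by
  have f : ∀ i : Fin 3, R 0 i * R 0 i + R 1 i * R 1 i + R 2 i * R 2 i = 1 := by
    intro i
    simpa [Matrix.mul_apply, Fin.sum_univ_three, Matrix.one_apply] using
      congrFun (congrFun hR i) i
  have f0 := f 0; have f1 := f 1; have f2 := f 2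
  nlinarith [sq_nonneg (R 0 0 - 1), sq_nonneg (R 1 1 - 1), sq_nonneg (R 2 2 - 1),
    sq_nonneg (R 1 0), sq_nonneg (R 2 0), sq_nonneg (R 0 1), sq_nonneg (R 2 1),
    sq_nonneg (R 0 2), sq_nonneg (R 1 2)]

def Ffun (Rt : ℝ → M3) : ℝ → ℝ := fun s => 3 - (Rt s 0 0 + Rt s 1 1 + Rt s 2 2)

lemma psidot_nonneg (R : M3) : 0 ≤ psi R ⬝ᵥ psi R := by
  simp only [psi, dotProduct, Fin.sum_univ_three, Matrix.cons_val_zero,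
    Matrix.cons_val_one, Matrix.head_cons, Matrix.cons_val_two, Matrix.tail_cons]
  nlinarith [sq_nonneg (R 2 1 - R 1 2), sq_nonneg (R 0 2 - R 2 0), sq_nonneg (R 1 0 - R 0 1)]

/-- local exponential stability of the desired equilibrium R̃ = I₃ of
    R̃' = −2 k_R R̃ [ψ(M R̃)]^× on SO(3). -/
theorem local_exponential_stability (M : M3) (hsym : Mᵀ = M) (hpsd : M.PosSemidef)
    (hdist : Function.Injective hpsd.1.eigenvalues) (kR : ℝ) (hkR : 0 < kR) :
    ∃ ε > (0 : ℝ), ∃ c > (0 : ℝ), ∃ lam > (0 : ℝ),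
      ∀ Rtil : ℝ → M3, (∀ t, 0 ≤ t → SO3 (Rtil t)) →
        (∀ t, 0 ≤ t →
          HasMatDerivAt Rtil ((-(2 * kR)) • (Rtil t * skew (psi (M * Rtil t)))) t) →
        nI (Rtil 0) ≤ ε →
        ∀ t, 0 ≤ t → nI (Rtil t) ≤ c * Real.exp (-lam * t) * nI (Rtil 0) := by
  obtain ⟨μ, hμ, hquad⟩ := quadpos M hpsd hdist
  set lam2 : ℝ := (3/2) * kR * μ with hlam2
  have hlam2pos : 0 < lam2 := by positivity
  refine ⟨1/2, by norm_num, 1, by norm_num, lam2 / 2, by positivity, ?_⟩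
  intro Rtil hSO hder hinit
  set F : ℝ → ℝ := Ffun Rtil with hF
  -- the derivative of F
  have hFder : ∀ t, 0 ≤ t → HasDerivAt F
      (-((2*kR) * (psi (Rtil t) ⬝ᵥ ((M.trace • (1 : M3) - M) *ᵥ psi (Rtil t))))) t := by
    intro t ht
    have h := hder t ht
    have h00 := h 0 0; have h11 := h 1 1; have h22 := h 2 2
    have hsum := ((h00.add h11).add h22).const_sub 3
    have hval : ((-(2 * kR)) • (Rtil t * skew (psi (M * Rtil t)))) 0 0
        + ((-(2 * kR)) • (Rtil t * skew (psi (M * Rtil t)))) 1 1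
        + ((-(2 * kR)) • (Rtil t * skew (psi (M * Rtil t)))) 2 2
        = (2*kR) * (psi (Rtil t) ⬝ᵥ ((M.trace • (1 : M3) - M) *ᵥ psi (Rtil t))) := by
      have h1 : ((-(2 * kR)) • (Rtil t * skew (psi (M * Rtil t)))) 0 0
          + ((-(2 * kR)) • (Rtil t * skew (psi (M * Rtil t)))) 1 1
          + ((-(2 * kR)) • (Rtil t * skew (psi (M * Rtil t)))) 2 2
          = (-(2 * kR)) * ((Rtil t * skew (psi (M * Rtil t))).trace) := by
        simp [Matrix.trace_fin_three, Matrix.smul_apply, smul_eq_mul]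
        ring
      rw [h1, trace_skew, identA M (Rtil t) hsym (hSO t ht).1]
      ring
    rw [hval] at hsum
    exact hsum
  -- nonnegativity of F
  have hFnn : ∀ t, 0 ≤ t → 0 ≤ F t := fun t ht => Fnonneg (Rtil t) (hSO t ht).1
  -- the psi dot identity
  have hpsiB : ∀ t, 0 ≤ t → psi (Rtil t) ⬝ᵥ psi (Rtil t) = F t * (1 - F t / 4) := by
    intro t ht
    rw [identB (Rtil t) (hSO t ht).1 (hSO t ht).2, trace_one_sub]
    rfl
  -- quadratic lower bound
  have hquadF : ∀ t, 0 ≤ t →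
      μ * (F t * (1 - F t / 4)) ≤ psi (Rtil t) ⬝ᵥ ((M.trace • (1 : M3) - M) *ᵥ psi (Rtil t)) := by
    intro t ht
    have := hquad (psi (Rtil t))
    rwa [hpsiB t ht] at this
  -- step 1 : F is bounded by F 0
  have hmono : ∀ t, 0 ≤ t → F t ≤ F 0 := by
    have h := decay F 0 ?_
    · intro t ht
      have := h t ht
      simpa using this
    · intro t ht
      refine ⟨_, hFder t ht, ?_⟩
      have h1 := hquadF t ht
      have h2 : 0 ≤ psi (Rtil t) ⬝ᵥ psi (Rtil t) := psidot_nonneg (Rtil t)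
      rw [hpsiB t ht] at h2
      nlinarith
  -- F 0 ≤ 1 from the initial condition
  have hF0nn : 0 ≤ F 0 := hFnn 0 le_rfl
  have hF01 : F 0 ≤ 1 := by
    have h1 : nI (Rtil 0) = Real.sqrt (F 0 / 4) := by
      rw [nI, trace_one_sub]
      rfl
    have h2 : Real.sqrt (F 0 / 4) ≤ 1/2 := by rw [← h1]; exact hinit
    have h3 : F 0 / 4 ≤ (1/2)^2 := by
      have := Real.sq_sqrt (by linarith : (0:ℝ) ≤ F 0 / 4)
      nlinarith [Real.sqrt_nonneg (F 0 / 4)]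
    linarith
  -- step 2 : exponential decay
  have hdecay : ∀ t, 0 ≤ t → F t ≤ F 0 * Real.exp (-lam2 * t) := by
    apply decay F lam2
    intro t ht
    refine ⟨_, hFder t ht, ?_⟩
    have h1 := hquadF t ht
    have h2 : F t ≤ 1 := le_trans (hmono t ht) hF01
    have h3 : 0 ≤ F t := hFnn t ht
    rw [hlam2]
    nlinarith [mul_le_mul_of_nonneg_left h1 (by positivity : (0:ℝ) ≤ 2*kR),
      mul_nonneg (mul_nonneg (mul_nonneg (le_of_lt hkR) (le_of_lt hμ)) h3)
        (by linarith : (0:ℝ) ≤ 1 - F t)]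
  -- conclude
  intro t ht
  have h1 : nI (Rtil t) = Real.sqrt (F t / 4) := by rw [nI, trace_one_sub]; rfl
  have h2 : nI (Rtil 0) = Real.sqrt (F 0 / 4) := by rw [nI, trace_one_sub]; rfl
  rw [h1, h2, one_mul]
  have h3 : F t / 4 ≤ Real.exp (-lam2 * t) * (F 0 / 4) := by
    have := hdecay t ht
    nlinarith [Real.exp_pos (-lam2 * t)]
  calc Real.sqrt (F t / 4) ≤ Real.sqrt (Real.exp (-lam2 * t) * (F 0 / 4)) :=
        Real.sqrt_le_sqrt h3
    _ = Real.sqrt (Real.exp (-lam2 * t)) * Real.sqrt (F 0 / 4) :=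
        Real.sqrt_mul (le_of_lt (Real.exp_pos _)) _
    _ = Real.exp (-(lam2/2) * t) * Real.sqrt (F 0 / 4) := by
        rw [← Real.exp_half]
        ring_nf
end
end

section
/- Let b_1, ..., b_m (m ≥ 2) be unit vectors in ℝ³ such that at least two of them are noncollinear (i.e., there exist j ≠ l with b_j and b_l linearly independent), and let k_1, ..., k_m > 0. Then the symmetric matrix Q := Σ_j k_j ([b_j]^×)ᵀ [b_j]^× is positive definite; in particular its smallest eigenvalue is positive. -/
open Matrix Real Filter

noncomputable section

lemma dp_self_nonneg (v : V3) : 0 ≤ v ⬝ᵥ v :=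
  Finset.sum_nonneg fun i _ => mul_self_nonneg _

lemma skew_mulVec_eq_zero (b x : V3) (hb : b ⬝ᵥ b = 1)
    (h : skew b *ᵥ x = 0) : x = (b ⬝ᵥ x) • b := by
  have h0 := congrFun h 0
  have h1 := congrFun h 1
  have h2 := congrFun h 2
  simp [skew, mulVec, dotProduct, Fin.sum_univ_three] at h0 h1 h2
  simp [dotProduct, Fin.sum_univ_three] at hb
  funext i
  fin_cases i <;> simp [dotProduct, Fin.sum_univ_three]
  · linear_combination -x 0 * hb - b 1 * h2 + b 2 * h1
  · linear_combination -x 1 * hb + b 0 * h2 - b 2 * h0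
  · linear_combination -x 2 * hb - b 0 * h1 + b 1 * h0

/-- with at least two noncollinear unit bearing vectors,
    Q = Σ k_j ([b_j]^×)ᵀ [b_j]^× is positive definite; in particular all of its
    eigenvalues are positive. -/
theorem Q_posdef (m : ℕ) (hm : 2 ≤ m) (b : Fin m → V3) (k : Fin m → ℝ)
    (hb : ∀ j, b j ⬝ᵥ b j = 1) (hk : ∀ j, 0 < k j)
    (hnc : ∃ j l, j ≠ l ∧ LinearIndependent ℝ ![b j, b l])
    (Q : M3) (hQ : Q = ∑ j, k j • ((skew (b j))ᵀ * skew (b j))) :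
    Q.PosDef ∧ ∀ (hher : Q.IsHermitian) (i : Fin 3), 0 < hher.eigenvalues i := by
  have hher : Q.IsHermitian := by
    subst hQ
    unfold Matrix.IsHermitian
    rw [conjTranspose_sum]
    refine Finset.sum_congr rfl fun j _ => ?_
    rw [conjTranspose_smul]
    have : ((skew (b j))ᵀ * skew (b j))ᴴ = (skew (b j))ᵀ * skew (b j) := by
      simp [conjTranspose, Matrix.transpose_mul]
      ext i l
      simp [Matrix.mul_apply]
    rw [this]
    simp
  have hpd : Q.PosDef := by
    refine Matrix.PosDef.of_dotProduct_mulVec_pos hher fun x hx => ?_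
    subst hQ
    have key : ∀ j, star x ⬝ᵥ ((k j • ((skew (b j))ᵀ * skew (b j))) *ᵥ x)
        = k j * ((skew (b j) *ᵥ x) ⬝ᵥ (skew (b j) *ᵥ x)) := by
      intro j
      rw [Matrix.smul_mulVec, dotProduct_smul]
      congr 1
      rw [← Matrix.mulVec_mulVec, star_trivial, Matrix.dotProduct_mulVec,
        Matrix.vecMul_transpose]
    have hsplit := map_sum (AddMonoidHom.mk' (fun M : M3 => star x ⬝ᵥ (M *ᵥ x))
      (by intro A B; simp [Matrix.add_mulVec, dotProduct_add]))
      (fun j => k j • ((skew (b j))ᵀ * skew (b j))) Finset.univ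
    simp only [AddMonoidHom.mk'_apply] at hsplit
    rw [hsplit]
    simp only [key]
    have hnn : ∀ j ∈ Finset.univ, 0 ≤ k j * ((skew (b j) *ᵥ x) ⬝ᵥ (skew (b j) *ᵥ x)) := by
      intro j _
      exact mul_nonneg (hk j).le (dp_self_nonneg _)
    obtain ⟨j, l, hjl, hind⟩ := hnc
    have hex : ∃ j ∈ Finset.univ, 0 < k j * ((skew (b j) *ᵥ x) ⬝ᵥ (skew (b j) *ᵥ x)) := by
      by_contra hcon
      push_neg at hcon
      have hzero : ∀ j, skew (b j) *ᵥ x = 0 := by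
        intro j
        have := hcon j (Finset.mem_univ j)
        have h2 : (skew (b j) *ᵥ x) ⬝ᵥ (skew (b j) *ᵥ x) = 0 := by
          nlinarith [hk j, dp_self_nonneg (skew (b j) *ᵥ x)]
        exact dotProduct_self_eq_zero.mp h2
      have hxj := skew_mulVec_eq_zero (b j) x (hb j) (hzero j)
      have hxl := skew_mulVec_eq_zero (b l) x (hb l) (hzero l)
      have hcomb : (b j ⬝ᵥ x) • b j + (-(b l ⬝ᵥ x)) • b l = 0 := by
        rw [← hxj, neg_smul, ← hxl]
        abel
      obtain ⟨hs, _⟩ := LinearIndependent.pair_iff.mp hind _ _ hcomb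
      rw [hs, zero_smul] at hxj
      exact hx hxj
    exact Finset.sum_pos' hnn hex
  exact ⟨hpd, fun hher2 i => hpd.eigenvalues_pos i⟩
end
end

section
/- Let b_1, ..., b_m (m ≥ 2) be unit vectors in ℝ³ such that at least two of them are noncollinear (i.e., there exist j ≠ l with b_j and b_l linearly independent). Then the symmetric matrix Σ_j P_{b_j}, where P_x := I₃ − x xᵀ/‖x‖², is positive definite. -/
open Matrix Real Filter

noncomputable section

lemma proj_mulVec (u x : V3) (hu : u ⬝ᵥ u = 1) :
    proj u *ᵥ x = x - (u ⬝ᵥ x) • u := by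
  have hu' : ∑ j, u j * u j = 1 := hu
  funext i
  simp only [proj, mulVec, dotProduct, vecMulVec_apply, Matrix.sub_apply, one_apply, hu', inv_one,
    one_mul, one_smul, sub_mul, Finset.sum_sub_distrib, Pi.sub_apply, Pi.smul_apply, smul_eq_mul]
  congr 1
  · simp
  · rw [Finset.sum_mul]
    exact Finset.sum_congr rfl fun j _ => by ring

lemma dot_proj (u x : V3) (hu : u ⬝ᵥ u = 1) :
    x ⬝ᵥ (proj u *ᵥ x) = (x - (u ⬝ᵥ x) • u) ⬝ᵥ (x - (u ⬝ᵥ x) • u) := by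
  rw [proj_mulVec u x hu]
  simp [dotProduct_sub, sub_dotProduct, dotProduct_smul, smul_dotProduct, hu, dotProduct_comm x u]

lemma sum_mulVec' {m : ℕ} (A : Fin m → M3) (x : V3) :
    (∑ j, A j) *ᵥ x = ∑ j, A j *ᵥ x := by
  funext i
  simp only [mulVec, dotProduct, Matrix.sum_apply, Finset.sum_mul, Finset.sum_apply]
  rw [Finset.sum_comm]

lemma dotProduct_sum' {m : ℕ} (x : V3) (v : Fin m → V3) :
    x ⬝ᵥ ∑ j, v j = ∑ j, x ⬝ᵥ v j := by
  simp only [dotProduct, Finset.sum_apply, Finset.mul_sum]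
  rw [Finset.sum_comm]

lemma proj_herm (u : V3) : (proj u).IsHermitian := by
  ext i k
  simp only [proj, conjTranspose_apply, Matrix.sub_apply, one_apply, vecMulVec_apply, Matrix.smul_apply,
    smul_eq_mul, star_trivial]
  rcases eq_or_ne i k with h | h
  · subst h; ring
  · rw [if_neg h, if_neg (Ne.symm h)]; ring

/-- with at least two noncollinear unit bearing vectors,
    Σ_j P_{b_j} is positive definite. -/
theorem sum_proj_posdef (m : ℕ) (hm : 2 ≤ m) (b : Fin m → V3)
    (hb : ∀ j, b j ⬝ᵥ b j = 1)
    (hnc : ∃ j l, j ≠ l ∧ LinearIndependent ℝ ![b j, b l]) :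
    (∑ j, proj (b j)).PosDef := by
  obtain ⟨j, l, hjl, hli⟩ := hnc
  rw [posDef_iff_dotProduct_mulVec]
  constructor
  · unfold Matrix.IsHermitian
    rw [conjTranspose_sum]
    exact Finset.sum_congr rfl fun k _ => proj_herm (b k)
  · intro x hx
    rw [star_trivial, sum_mulVec', dotProduct_sum' _ _]
    have key : ∀ k, 0 ≤ x ⬝ᵥ (proj (b k) *ᵥ x) := fun k => by
      rw [dot_proj _ _ (hb k)]
      exact Finset.sum_nonneg fun i _ => mul_self_nonneg _
    refine Finset.sum_pos' (fun k _ => key k) ?_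
    by_contra h
    push_neg at h
    have hz : ∀ k, x - (b k ⬝ᵥ x) • b k = 0 := fun k => by
      have h0 : x ⬝ᵥ (proj (b k) *ᵥ x) = 0 := le_antisymm (h k (Finset.mem_univ k)) (key k)
      rw [dot_proj _ _ (hb k)] at h0
      exact dotProduct_self_eq_zero.mp h0
    have hxj : x = (b j ⬝ᵥ x) • b j := by
      have := hz j; rwa [sub_eq_zero] at this
    have hxl : x = (b l ⬝ᵥ x) • b l := by
      have := hz l; rwa [sub_eq_zero] at this
    have hcj : (b j ⬝ᵥ x) ≠ 0 := fun h0 => hx (by rw [hxj, h0, zero_smul])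
    rw [linearIndependent_fin2] at hli
    refine hli.2 ((b j ⬝ᵥ x)⁻¹ * (b l ⬝ᵥ x)) ?_
    show ((b j ⬝ᵥ x)⁻¹ * (b l ⬝ᵥ x)) • b l = b j
    calc ((b j ⬝ᵥ x)⁻¹ * (b l ⬝ᵥ x)) • b l
        = (b j ⬝ᵥ x)⁻¹ • ((b l ⬝ᵥ x) • b l) := mul_smul _ _ _
      _ = (b j ⬝ᵥ x)⁻¹ • ((b j ⬝ᵥ x) • b j) := by rw [← hxl, ← hxj]
      _ = b j := inv_smul_smul₀ hcj _
end
end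

section
/- Fix p ∈ ℝ³ (the agent's position) and, for j = 1, ..., m, fixed neighbor positions p_j ∈ ℝ³ with p_j ≠ p, and set b_j := (p_j − p)/‖p_j − p‖. Let R, R̂ : ℝ → SO(3) be differentiable, let R̃ := R R̂ᵀ satisfy R̃'(t) = −2 k_R R̃(t)[ψ(M R̃(t))]^× + k_R R̃(t)[Σ_j k_j g_j(t)]^× with M := Σ_j k_j b_j b_jᵀ, g_j(t) := (R̃_j(t)ᵀ − I₃) b_j × R̃(t)ᵀ b_j, where R̃_j := R_j Â_jᵀ for continuous R_j, Â_j : ℝ → SO(3). Let p̂_j : ℝ → ℝ³ be continuous neighbor position estimates with associated errors p̃_j := p_j − R̃_j p̂_j, and let p̂ : ℝ → ℝ³ be differentiable with p̂'(t) = −k_R [Σ_j k_j (Â_j(t) R_j(t)ᵀ b_j × R̂(t) R(t)ᵀ b_j)]^× p̂(t) − k_p Σ_j R̂(t) P_{R(t)ᵀ b_j} R̂(t)ᵀ (p̂(t) − p̂_j(t)), where k_p, k_R, k_j > 0. Then p̃ := p − R̃ p̂ satisfies p̃'(t) = −k_p Σ_j P_{b_j} p̃(t) + k_p Σ_j P_{b_j}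 f_j(t), where f_j(t) := ((R̃_j(t) − I₃) − (R̃(t) − I₃)) R̃_j(t)ᵀ (p_j − p̃_j(t)) + p̃_j(t). -/
open Matrix Real Filter

noncomputable section

lemma psi_sum_s15 {m : ℕ} (C : Fin m → M3) : psi (∑ j, C j) = ∑ j, psi (C j) := by
  funext i
  fin_cases i <;>
    rw [psi] <;> simp [Matrix.sum_apply, ← Finset.sum_sub_distrib, Finset.sum_div, psi]

lemma vecMulVec_mul (x y : V3) (A : M3) : vecMulVec x y * A = vecMulVec x (Aᵀ *ᵥ y) := by
  ext i k
  simp [vecMulVec_apply, mul_apply, mulVec, dotProduct, Finset.mul_sum]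
  apply Finset.sum_congr rfl; intro l _; ring

lemma psi_vecMulVec (u v : V3) : psi (vecMulVec u v) = (2:ℝ)⁻¹ • crossProduct v u := by
  funext i; fin_cases i <;> simp [psi, vecMulVec_apply, crossProduct] <;> ring

lemma SO3.mul_transpose {A : M3} (h : SO3 A) : A * Aᵀ = 1 :=
  mul_eq_one_comm.mp h.1

lemma dot_conj (A : M3) (x y : V3) (h : A * Aᵀ = 1) :
    (Aᵀ *ᵥ x) ⬝ᵥ (Aᵀ *ᵥ y) = x ⬝ᵥ y := by
  rw [Matrix.dotProduct_mulVec, Matrix.vecMul_transpose, Matrix.mulVec_mulVec, h,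
    Matrix.one_mulVec]

lemma vecMulVec_conj (A : M3) (x y : V3) :
    vecMulVec (Aᵀ *ᵥ x) (Aᵀ *ᵥ y) = Aᵀ * vecMulVec x y * A := by
  ext i k
  simp [vecMulVec_apply, mul_apply, mulVec, dotProduct, Finset.mul_sum, Finset.sum_mul]
  apply Finset.sum_congr rfl; intro l _
  apply Finset.sum_congr rfl; intro l' _
  ring

lemma proj_conj (A : M3) (x : V3) (h : SO3 A) :
    proj (Aᵀ *ᵥ x) = Aᵀ * proj x * A := by
  rw [proj, proj, dot_conj A x x h.mul_transpose, vecMulVec_conj,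
    Matrix.mul_sub, Matrix.sub_mul, Matrix.mul_smul, Matrix.smul_mul, mul_one, h.1]

lemma crossid (c kj : ℝ) (u v x : V3) :
    (-(2*c)) • (kj • ((2:ℝ)⁻¹ • crossProduct v x)) + c • (kj • crossProduct (u - x) v)
      = c • (kj • crossProduct u v) := by
  funext i; fin_cases i <;> simp [crossProduct] <;> ring

lemma mulVec_sum' {m : ℕ} (A : M3) (f : Fin m → V3) :
    A *ᵥ (∑ j, f j) = ∑ j, A *ᵥ f j := by
  funext i
  simp [mulVec, dotProduct, Finset.sum_apply, Finset.mul_sum]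
  exact Finset.sum_comm

lemma vecMulVec_self_mulVec (v : V3) : vecMulVec v v *ᵥ v = (v ⬝ᵥ v) • v := by
  funext i
  simp [vecMulVec_apply, mulVec, dotProduct, Finset.mul_sum, Finset.sum_mul]
  apply Finset.sum_congr rfl; intro l _
  ring

lemma proj_mulVec_self (v : V3) (hv : v ⬝ᵥ v ≠ 0) : proj v *ᵥ v = 0 := by
  rw [proj, Matrix.sub_mulVec, Matrix.one_mulVec, smul_mulVec, vecMulVec_self_mulVec,
    inv_smul_smul₀ hv, sub_self]

lemma proj_smul (c : ℝ) (hc : c ≠ 0) (v : V3) : proj (c • v) = proj v := by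
  rw [proj, proj]
  congr 1
  rw [smul_dotProduct, dotProduct_smul]
  have : vecMulVec (c • v) (c • v) = (c * c) • vecMulVec v v := by
    ext i k; simp [vecMulVec_apply]; ring
  have hcc : c * c ≠ 0 := mul_ne_zero hc hc
  rw [this, smul_smul, smul_smul, smul_eq_mul, mul_inv,
    mul_comm ((c*c)⁻¹) ((v ⬝ᵥ v)⁻¹), mul_assoc, inv_mul_cancel₀ hcc, mul_one]

/-- the position estimation error dynamics. With fixed positions p, p_j,
    bearings b_j = (p_j − p)/‖p_j − p‖, attitude errors R̃ = R R̂ᵀ and R̃_j = R_j Â_jᵀ, and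
    the proposed position observer, the error p̃ = p − R̃ p̂ satisfies
    p̃' = −k_p Σ_j P_{b_j} p̃ + k_p Σ_j P_{b_j} f_j. -/
theorem position_error_dynamics (m : ℕ) (p : V3) (pj : Fin m → V3)
    (hpj : ∀ j, pj j ≠ p)
    (b : Fin m → V3) (hb : ∀ j, b j = (norm3 (pj j - p))⁻¹ • (pj j - p))
    (kp kR : ℝ) (k : Fin m → ℝ) (hkp : 0 < kp) (hkR : 0 < kR) (hk : ∀ j, 0 < k j)
    (R Rhat : ℝ → M3) (hR : ∀ t, SO3 (R t)) (hRhat : ∀ t, SO3 (Rhat t))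
    (hRdiff : ∀ t i i', DifferentiableAt ℝ (fun s => R s i i') t)
    (hRhatdiff : ∀ t i i', DifferentiableAt ℝ (fun s => Rhat s i i') t)
    (Rtil : ℝ → M3) (hRtil : ∀ t, Rtil t = R t * (Rhat t)ᵀ)
    (Rj Aj : Fin m → ℝ → M3)
    (hRjSO3 : ∀ j t, SO3 (Rj j t)) (hAjSO3 : ∀ j t, SO3 (Aj j t))
    (hRjcont : ∀ j i i', Continuous (fun t => Rj j t i i'))
    (hAjcont : ∀ j i i', Continuous (fun t => Aj j t i i'))
    (Rtilj : Fin m → ℝ → M3) (hRtilj : ∀ j t, Rtilj j t = Rj j t * (Aj j t)ᵀ)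
    (M : M3) (hM : M = ∑ j, k j • vecMulVec (b j) (b j))
    (g : Fin m → ℝ → V3)
    (hg : ∀ j t, g j t = crossProduct (((Rtilj j t)ᵀ - 1) *ᵥ b j) ((Rtil t)ᵀ *ᵥ b j))
    (hRtildyn : ∀ t, HasMatDerivAt Rtil
      ((-(2 * kR)) • (Rtil t * skew (psi (M * Rtil t))) +
        kR • (Rtil t * skew (∑ j, k j • g j t))) t)
    (phatj : Fin m → ℝ → V3) (hphatjcont : ∀ j i, Continuous (fun t => phatj j t i))
    (ptilj : Fin m → ℝ → V3) (hptilj : ∀ j t, ptilj j t = pj j - Rtilj j t *ᵥ phatj j t)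
    (phat : ℝ → V3)
    (hphatdyn : ∀ t, HasVecDerivAt phat
      ((-kR) • (skew (∑ j, k j • crossProduct (Aj j t *ᵥ ((Rj j t)ᵀ *ᵥ b j))
          (Rhat t *ᵥ ((R t)ᵀ *ᵥ b j))) *ᵥ phat t) -
        kp • ∑ j, (Rhat t * proj ((R t)ᵀ *ᵥ b j) * (Rhat t)ᵀ) *ᵥ (phat t - phatj j t)) t)
    (ptil : ℝ → V3) (hptil : ∀ t, ptil t = p - Rtil t *ᵥ phat t)
    (f : Fin m → ℝ → V3)
    (hf : ∀ j t, f j t = ((Rtilj j t - 1) - (Rtil t - 1)) *ᵥ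
        ((Rtilj j t)ᵀ *ᵥ (pj j - ptilj j t)) + ptilj j t) :
    ∀ t, HasVecDerivAt ptil
      ((-kp) • ((∑ j, proj (b j)) *ᵥ ptil t) + kp • ∑ j, proj (b j) *ᵥ f j t) t := by
  intro t
  have hRtT : (Rtil t)ᵀ = Rhat t * (R t)ᵀ := by
    rw [hRtil, transpose_mul, transpose_transpose]
  have hRtjT : ∀ j, (Rtilj j t)ᵀ = Aj j t * (Rj j t)ᵀ := fun j => by
    rw [hRtilj, transpose_mul, transpose_transpose]
  -- the "w" vector appearing in both dynamics
  set w0 : V3 := ∑ j, k j • crossProduct (Aj j t *ᵥ ((Rj j t)ᵀ *ᵥ b j))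
      (Rhat t *ᵥ ((R t)ᵀ *ᵥ b j)) with hw0
  -- Step A: psi of M * Rtil
  have hpsi : psi (M * Rtil t)
      = ∑ j, k j • ((2:ℝ)⁻¹ • crossProduct ((Rtil t)ᵀ *ᵥ b j) (b j)) := by
    rw [hM, Finset.sum_mul, psi_sum_s15]
    apply Finset.sum_congr rfl; intro j _
    rw [Matrix.smul_mul, psi_smul, vecMulVec_mul, psi_vecMulVec]
  -- Step B: the combined vector identity
  have hV : (-(2*kR)) • psi (M * Rtil t) + kR • (∑ j, k j • g j t) = kR • w0 := by
    rw [hpsi, hw0, Finset.smul_sum, Finset.smul_sum, Finset.smul_sum,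
      ← Finset.sum_add_distrib]
    apply Finset.sum_congr rfl; intro j _
    rw [hg, Matrix.mulVec_mulVec, Matrix.mulVec_mulVec, ← hRtjT j, ← hRtT,
      Matrix.sub_mulVec, Matrix.one_mulVec]
    exact crossid kR (k j) _ _ _
  -- Step B': matrix form
  have hA : (-(2 * kR)) • (Rtil t * skew (psi (M * Rtil t))) +
      kR • (Rtil t * skew (∑ j, k j • g j t)) = Rtil t * skew (kR • w0) := by
    rw [← hV, skew_add, skew_smul, skew_smul, Matrix.mul_add, Matrix.mul_smul,
      Matrix.mul_smul]
  -- Step C: conjugation of the projection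
  have hQ : ∀ j, Rtil t * (Rhat t * proj ((R t)ᵀ *ᵥ b j) * (Rhat t)ᵀ)
      = proj (b j) * Rtil t := by
    intro j
    have h1 : (Rhat t)ᵀ * Rhat t = 1 := (hRhat t).1
    have h2 : R t * (R t)ᵀ = 1 := (hR t).mul_transpose
    rw [proj_conj _ _ (hR t), hRtil]
    simp only [← mul_assoc]
    rw [mul_assoc (R t) ((Rhat t)ᵀ) (Rhat t), h1, mul_one, h2, one_mul, mul_assoc]
  -- Step D: simplify f
  have hfeq : ∀ j, f j t = pj j - Rtil t *ᵥ phatj j t := by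
    intro j
    have hso : (Rtilj j t)ᵀ * Rtilj j t = 1 := by
      rw [hRtjT j, hRtilj, ← mul_assoc, mul_assoc (Aj j t) ((Rj j t)ᵀ) (Rj j t),
        (hRjSO3 j t).1, mul_one, (hAjSO3 j t).mul_transpose]
    have hrec : (Rtilj j t)ᵀ *ᵥ (pj j - ptilj j t) = phatj j t := by
      rw [hptilj, sub_sub_cancel, Matrix.mulVec_mulVec, hso, Matrix.one_mulVec]
    rw [hf, hrec, sub_sub_sub_cancel_right, Matrix.sub_mulVec, hptilj]
    abel
  -- Step E: projection kills p - pj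
  have hproj0 : ∀ j, proj (b j) *ᵥ (p - pj j) = 0 := by
    intro j
    have hvne : pj j - p ≠ 0 := sub_ne_zero.mpr (hpj j)
    have hdot : (pj j - p) ⬝ᵥ (pj j - p) ≠ 0 :=
      fun h => hvne (dotProduct_self_eq_zero.mp h)
    have hnonneg : 0 ≤ (pj j - p) ⬝ᵥ (pj j - p) :=
      Finset.sum_nonneg fun i _ => mul_self_nonneg _
    have hpos : 0 < (pj j - p) ⬝ᵥ (pj j - p) := lt_of_le_of_ne hnonneg (Ne.symm hdot)
    have hn : norm3 (pj j - p) ≠ 0 := by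
      rw [norm3]; exact (Real.sqrt_pos.mpr hpos).ne'
    rw [hb j, proj_smul _ (inv_ne_zero hn), show p - pj j = -(pj j - p) from (neg_sub _ _).symm,
      Matrix.mulVec_neg, proj_mulVec_self _ hdot, neg_zero]
  -- Step F: per-j term
  have h7 : ∀ j, Rtil t *ᵥ ((Rhat t * proj ((R t)ᵀ *ᵥ b j) * (Rhat t)ᵀ) *ᵥ
        (phat t - phatj j t)) = proj (b j) *ᵥ f j t - proj (b j) *ᵥ ptil t := by
    intro j
    have h9 : Rtil t *ᵥ phat t = p - ptil t := by rw [hptil]; abel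
    have h8 : Rtil t *ᵥ (phat t - phatj j t) = (p - pj j) + (f j t - ptil t) := by
      rw [Matrix.mulVec_sub, hfeq j, h9]; abel
    rw [Matrix.mulVec_mulVec, hQ j, ← Matrix.mulVec_mulVec, h8, Matrix.mulVec_add,
      hproj0 j, zero_add, Matrix.mulVec_sub]
  -- the key algebraic identity
  have key : -(((-(2 * kR)) • (Rtil t * skew (psi (M * Rtil t))) +
        kR • (Rtil t * skew (∑ j, k j • g j t))) *ᵥ phat t +
      Rtil t *ᵥ ((-kR) • (skew w0 *ᵥ phat t) -
        kp • ∑ j, (Rhat t * proj ((R t)ᵀ *ᵥ b j) * (Rhat t)ᵀ) *ᵥ (phat t - phatj j t))) =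
      (-kp) • ((∑ j, proj (b j)) *ᵥ ptil t) + kp • ∑ j, proj (b j) *ᵥ f j t := by
    rw [hA]
    have h5 : (-kR) • (skew w0 *ᵥ phat t) = -(skew (kR • w0) *ᵥ phat t) := by
      rw [skew_smul, smul_mulVec, neg_smul]
    rw [h5, ← Matrix.mulVec_mulVec (phat t) (Rtil t) (skew (kR • w0)),
      ← Matrix.mulVec_add]
    have h6 : skew (kR • w0) *ᵥ phat t +
        (-(skew (kR • w0) *ᵥ phat t) -
          kp • ∑ j, (Rhat t * proj ((R t)ᵀ *ᵥ b j) * (Rhat t)ᵀ) *ᵥ (phat t - phatj j t)) =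
        -(kp • ∑ j, (Rhat t * proj ((R t)ᵀ *ᵥ b j) * (Rhat t)ᵀ) *ᵥ (phat t - phatj j t)) := by
      abel
    rw [h6, Matrix.mulVec_neg, neg_neg, Matrix.mulVec_smul, mulVec_sum']
    have h10 : ∀ j ∈ Finset.univ, Rtil t *ᵥ ((Rhat t * proj ((R t)ᵀ *ᵥ b j) * (Rhat t)ᵀ) *ᵥ
        (phat t - phatj j t)) = proj (b j) *ᵥ f j t - proj (b j) *ᵥ ptil t :=
      fun j _ => h7 j
    rw [Finset.sum_congr rfl h10, Finset.sum_sub_distrib, smul_sub, sum_mulVec', neg_smul]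
    abel
  -- derivative computation
  intro i
  have hRd := hRtildyn t
  have hpd := hphatdyn t
  rw [← hw0] at hpd
  have hcomp : (fun s => ptil s i) = fun s => p i - ∑ l, Rtil s i l * phat s l := by
    funext s
    rw [hptil]
    simp [mulVec, dotProduct]
  rw [hcomp]
  have hder := HasDerivAt.const_sub (p i)
    (HasDerivAt.fun_sum (u := Finset.univ) (fun l _ => (hRd i l).fun_mul (hpd l)))
  refine hder.congr_deriv ?_
  symm
  rw [← key]
  simp [mulVec, dotProduct, Finset.sum_add_distrib]
end
end

section
/- Let b_1, ..., b_m (m ≥ 2) be unit vectors in ℝ³ with at least two of them noncollinear, k_p > 0, A := Σ_j P_{b_j} with smallest eigenvalue λ > 0. Let f_j : [0, ∞) → ℝ³ be continuous inputs and let p̃ : [0, ∞) → ℝ³ be a differentiable solution of p̃'(t) = −k_p A p̃(t) + k_p Σ_j P_{b_j} f_j(t). Then, with P̄ := √2 (so that ‖P_{b_j}‖_F ≤ P̄), for every ξ with 0 < ξ < λ/(P̄ m) the function V(t) := (1/2)‖p̃(t)‖² satisfies, for all t ≥ 0, V'(t) ≤ −k_p (λ − P̄ ξ m) ‖p̃(t)‖²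 + (k_p P̄/(4ξ)) Σ_j ‖f_j(t)‖². -/
open Matrix Real Filter

noncomputable section

set_option maxHeartbeats 1000000 in
private lemma proj_young_bound (b p g : V3) (hb : b ⬝ᵥ b = 1) (ξ : ℝ) (hξ : 0 < ξ) :
    p ⬝ᵥ (proj b *ᵥ g) ≤ ξ * (p ⬝ᵥ p) + (g ⬝ᵥ g) / (4*ξ) := by
  have h4 : (0:ℝ) < 4*ξ := by linarith
  have hb' : b 0 * b 0 + b 1 * b 1 + b 2 * b 2 = 1 := by
    simpa [dotProduct, Fin.sum_univ_three] using hb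
  rw [← mul_le_mul_iff_right₀ h4]
  have heq : (4*ξ) * (ξ * (p ⬝ᵥ p) + (g ⬝ᵥ g)/(4*ξ)) = 4*ξ*ξ*(p ⬝ᵥ p) + g ⬝ᵥ g := by
    field_simp
  rw [heq]
  simp (config := { decide := true }) only [proj, mulVec, dotProduct, Fin.sum_univ_three,
    inv_one, one_smul, Matrix.sub_apply, Matrix.one_apply, Matrix.vecMulVec_apply, hb',
    Fin.isValue, if_true, if_false, smul_eq_mul]
  have h5 : (b 0*b 0+b 1*b 1+b 2*b 2) * ((g 0-2*ξ*p 0)^2 + (g 1-2*ξ*p 1)^2 + (g 2-2*ξ*p 2)^2)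
      = (g 0-2*ξ*p 0)^2 + (g 1-2*ξ*p 1)^2 + (g 2-2*ξ*p 2)^2 := by rw [hb', one_mul]
  nlinarith [h5, sq_nonneg (2*ξ*(b 0 * p 0 + b 1 * p 1 + b 2 * p 2)),
    sq_nonneg (b 0 * (g 1 - 2*ξ*p 1) - b 1 * (g 0 - 2*ξ*p 0)),
    sq_nonneg (b 0 * (g 2 - 2*ξ*p 2) - b 2 * (g 0 - 2*ξ*p 0)),
    sq_nonneg (b 1 * (g 2 - 2*ξ*p 2) - b 2 * (g 1 - 2*ξ*p 1)),
    sq_nonneg (b 0 * g 0 + b 1 * g 1 + b 2 * g 2),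
    sq_nonneg (b 0 * p 0 + b 1 * p 1 + b 2 * p 2), hb', hξ, sq_nonneg ξ]

private lemma dot_sum {ι : Type*} (x : V3) (s : Finset ι) (v : ι → V3) :
    x ⬝ᵥ (∑ j ∈ s, v j) = ∑ j ∈ s, x ⬝ᵥ v j := by
  simp only [dotProduct, Finset.sum_apply, Finset.mul_sum]
  rw [Finset.sum_comm]

private lemma dot_self_nonneg (x : V3) : 0 ≤ x ⬝ᵥ x :=
  Finset.sum_nonneg fun i _ => mul_self_nonneg _


/-- ISS-type Lyapunov inequality for the forced position error dynamics:
    with V = (1/2)‖p̃‖², P̄ = √2 and 0 < ξ < λ/(P̄ m),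
    V'(t) ≤ −k_p (λ − P̄ ξ m) ‖p̃(t)‖² + (k_p P̄/(4ξ)) Σ_j ‖f_j(t)‖². -/

theorem position_ISS_inequality (m : ℕ) (hm : 2 ≤ m) (b : Fin m → V3)
    (hb : ∀ j, b j ⬝ᵥ b j = 1)
    (hnc : ∃ j l, j ≠ l ∧ LinearIndependent ℝ ![b j, b l])
    (kp : ℝ) (hkp : 0 < kp)
    (A : M3) (hA : A = ∑ j, proj (b j))
    (lam : ℝ) (hlampos : 0 < lam)
    (hlam : IsGreatest {c : ℝ | ∀ x : V3, c * (x ⬝ᵥ x) ≤ x ⬝ᵥ (A *ᵥ x)} lam)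
    (f : Fin m → ℝ → V3) (hfcont : ∀ j i, Continuous (fun t => f j t i))
    (ptil : ℝ → V3)
    (hdyn : ∀ t, 0 ≤ t →
      HasVecDerivAt ptil ((-kp) • (A *ᵥ ptil t) + kp • ∑ j, proj (b j) *ᵥ f j t) t)
    (Pbar : ℝ) (hPbar : Pbar = Real.sqrt 2)
    (ξ : ℝ) (hξ0 : 0 < ξ) (hξ : ξ < lam / (Pbar * m)) :
    ∀ t, 0 ≤ t →
      deriv (fun s => (1/2 : ℝ) * (ptil s ⬝ᵥ ptil s)) t ≤
        -(kp * (lam - Pbar * ξ * m)) * (ptil t ⬝ᵥ ptil t) +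
          kp * Pbar / (4 * ξ) * ∑ j, f j t ⬝ᵥ f j t := by
  intro t ht
  have hd := hdyn t ht
  set x := ptil t with hx
  set p' : V3 := (-kp) • (A *ᵥ ptil t) + kp • ∑ j, proj (b j) *ᵥ f j t with hp'
  -- derivative of V
  have h012 := (((hd 0).mul (hd 0)).add ((hd 1).mul (hd 1))).add ((hd 2).mul (hd 2))
  have hV := HasDerivAt.const_mul (1/2 : ℝ) h012
  have hfun : (fun s => (1/2:ℝ) * (ptil s ⬝ᵥ ptil s))
      = (fun s => (1/2:ℝ) * (ptil s 0 * ptil s 0 + ptil s 1 * ptil s 1 + ptil s 2 * ptil s 2)) := by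
    funext s; simp [dotProduct, Fin.sum_univ_three]
  rw [hfun, (show HasDerivAt (fun s => (1/2:ℝ) * (ptil s 0 * ptil s 0 + ptil s 1 * ptil s 1 + ptil s 2 * ptil s 2)) _ t from hV).deriv]
  have hxd : (1/2:ℝ) * ((p' 0 * x 0 + x 0 * p' 0) + (p' 1 * x 1 + x 1 * p' 1)
      + (p' 2 * x 2 + x 2 * p' 2)) = x ⬝ᵥ p' := by
    simp only [dotProduct, Fin.sum_univ_three]; ring
  rw [hxd]
  have hsplit : x ⬝ᵥ p' = -kp * (x ⬝ᵥ (A *ᵥ x)) + kp * ∑ j, x ⬝ᵥ (proj (b j) *ᵥ f j t) := by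
    rw [hp', dotProduct_add, dotProduct_smul, dotProduct_smul, dot_sum]
    simp [smul_eq_mul, hx]
  rw [hsplit]
  -- bounds
  have hA1 : lam * (x ⬝ᵥ x) ≤ x ⬝ᵥ (A *ᵥ x) := hlam.1 x
  have hsum : ∑ j, x ⬝ᵥ (proj (b j) *ᵥ f j t)
      ≤ (m:ℝ) * (ξ * (x ⬝ᵥ x)) + (∑ j, f j t ⬝ᵥ f j t) / (4*ξ) := by
    calc ∑ j, x ⬝ᵥ (proj (b j) *ᵥ f j t)
        ≤ ∑ j : Fin m, (ξ * (x ⬝ᵥ x) + (f j t ⬝ᵥ f j t) / (4*ξ)) :=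
          Finset.sum_le_sum fun j _ => proj_young_bound (b j) x (f j t) (hb j) ξ hξ0
      _ = (m:ℝ) * (ξ * (x ⬝ᵥ x)) + (∑ j, f j t ⬝ᵥ f j t) / (4*ξ) := by
          rw [Finset.sum_add_distrib, Finset.sum_const, Finset.sum_div]
          simp [nsmul_eq_mul]
  have hS : 0 ≤ x ⬝ᵥ x := dot_self_nonneg x
  have hT : 0 ≤ ∑ j, f j t ⬝ᵥ f j t := Finset.sum_nonneg fun j _ => dot_self_nonneg _
  have hP1 : 1 ≤ Pbar := by
    rw [hPbar, show (1:ℝ) = Real.sqrt 1 from Real.sqrt_one.symm]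
    exact Real.sqrt_le_sqrt (by norm_num)
  have hm0 : (0:ℝ) ≤ (m:ℝ) := Nat.cast_nonneg m
  have hx2 : kp * (lam * (x ⬝ᵥ x)) ≤ kp * (x ⬝ᵥ (A *ᵥ x)) :=
    mul_le_mul_of_nonneg_left hA1 hkp.le
  have hsum2 : kp * (∑ j, x ⬝ᵥ (proj (b j) *ᵥ f j t))
      ≤ kp * ((m:ℝ) * (ξ * (x ⬝ᵥ x)) + (∑ j, f j t ⬝ᵥ f j t) / (4*ξ)) :=
    mul_le_mul_of_nonneg_left hsum hkp.le
  have gap1 : 0 ≤ kp * ξ * (m:ℝ) * (x ⬝ᵥ x) * (Pbar - 1) :=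
    mul_nonneg (mul_nonneg (mul_nonneg (mul_nonneg hkp.le hξ0.le) hm0) hS)
      (by linarith)
  have gap2 : 0 ≤ kp * (Pbar - 1) * (∑ j, f j t ⬝ᵥ f j t) / (4*ξ) :=
    div_nonneg (mul_nonneg (mul_nonneg hkp.le (by linarith)) hT) (by linarith)
  have e1 : kp * ((m:ℝ) * (ξ * (x ⬝ᵥ x)) + (∑ j, f j t ⬝ᵥ f j t) / (4*ξ))
      + kp * ξ * (m:ℝ) * (x ⬝ᵥ x) * (Pbar - 1)
      + kp * (Pbar - 1) * (∑ j, f j t ⬝ᵥ f j t) / (4*ξ)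
      = kp * Pbar * ξ * (m:ℝ) * (x ⬝ᵥ x) + kp * Pbar / (4*ξ) * ∑ j, f j t ⬝ᵥ f j t := by
    field_simp; ring
  nlinarith [hx2, hsum2, gap1, gap2, e1]
end
end
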